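/- arXiv:1806.04279 — 14 statements merged into one kernel-verified Lean document; each statement's English description precedes it below -/
import Mathlib

section
/- Let G and H be finite groups, φ : G → H a surjective homomorphism, and A = (a_{ij}) a (G, m, λ) difference matrix. Then φ(A) = (φ(a_{ij})) is an (H, m, λ·|ker φ|) difference matrix. -/
def IsDiffMatrix {G : Type*} [Group G] {I J : Type*} (A : I → J → G) (lam : ℕ) : Prop :=
  Nat.card J = lam * Nat.card G ∧
  ∀ i ℓ : I, i ≠ ℓ → ∀ g : G, Nat.card {j : J // A i j * (A ℓ j)⁻¹ = g} = lam

theorem stmt_2 {G H : Type*} [Group G] [Finite G] [Group H] [Finite H]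
    {m c lam : ℕ} (φ : G →* H) (hφ : Function.Surjective φ)
    (A : Fin m → Fin c → G) (hA : IsDiffMatrix A lam) :
    IsDiffMatrix (fun i j => φ (A i j)) (lam * Nat.card φ.ker) := by
  obtain ⟨hc, hcount⟩ := hA
  have hG : Nat.card G = Nat.card H * Nat.card φ.ker := by
    rw [← Nat.card_congr (QuotientGroup.quotientKerEquivOfSurjective φ hφ).toEquiv]
    exact Subgroup.card_eq_card_quotient_mul_card_subgroup φ.ker
  have fibcard : ∀ h : H, Nat.card {g : G // φ g = h} = Nat.card φ.ker := by
    intro h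
    obtain ⟨g0, hg0⟩ := hφ h
    refine Nat.card_congr (Equiv.symm ?_)
    refine ⟨fun k => ⟨k.1 * g0, by
        have := k.2
        simp only [MonoidHom.mem_ker] at this
        simp [this, hg0]⟩,
      fun g => ⟨g.1 * g0⁻¹, by
        simp only [MonoidHom.mem_ker, map_mul, map_inv, g.2, hg0, mul_inv_cancel]⟩,
      fun k => by ext; simp,
      fun g => by ext; simp⟩
  constructor
  · rw [hc, hG]; ring
  · intro i ℓ hne h
    set d : Fin c → G := fun j => A i j * (A ℓ j)⁻¹ with hd
    have key : ∀ j, φ (A i j) * (φ (A ℓ j))⁻¹ = φ (d j) := by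
      intro j; simp [hd]
    have e : {j : Fin c // φ (A i j) * (φ (A ℓ j))⁻¹ = h} ≃
        Σ g : {g : G // φ g = h}, {j : Fin c // d j = g.1} :=
      { toFun := fun j => ⟨⟨d j.1, by rw [← key]; exact j.2⟩, ⟨j.1, rfl⟩⟩
        invFun := fun p => ⟨p.2.1, by rw [key, p.2.2]; exact p.1.2⟩
        left_inv := fun j => rfl
        right_inv := fun ⟨⟨g, hg⟩, ⟨j, hj⟩⟩ => Sigma.subtype_ext (Subtype.ext hj) rfl }
    rw [Nat.card_congr e]
    have : ∀ g : {g : G // φ g = h}, Nat.card {j : Fin c // d j = g.1} = lam := by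
      intro g; exact hcount i ℓ hne g.1
    classical
    have : Nat.card (Σ g : {g : G // φ g = h}, {j : Fin c // d j = g.1})
        = Nat.card {g : G // φ g = h} * lam := by
      have inst : Fintype {g : G // φ g = h} := Fintype.ofFinite _
      have inst2 : ∀ g : {g : G // φ g = h}, Fintype {j : Fin c // d j = g.1} :=
        fun g => Fintype.ofFinite _
      rw [Nat.card_eq_fintype_card, Fintype.card_sigma]
      calc ∑ g : {g : G // φ g = h}, Fintype.card {j : Fin c // d j = g.1}
          = ∑ g : {g : G // φ g = h}, lam := by
            refine Finset.sum_congr rfl fun g _ => ?_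
            rw [← Nat.card_eq_fintype_card]; exact this g
        _ = Nat.card {g : G // φ g = h} * lam := by
            simp [Nat.card_eq_fintype_card, mul_comm]
    rw [this, fibcard h, mul_comm]
end

section
/- Let p be prime and let m, n ≥ 1 and s ≥ 0 be integers. Then there exists a (Z_p^n, m, p^s) difference matrix if and only if m ≤ p^{n+s}. -/
def IsAddDiffMatrix {G : Type*} [AddGroup G] {I J : Type*} (A : I → J → G) (lam : ℕ) : Prop :=
  Nat.card J = lam * Nat.card G ∧
  ∀ i ℓ : I, i ≠ ℓ → ∀ g : G, Nat.card {j : J // A i j - A ℓ j = g} = lam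

/-!
Necessity: for a nontrivial character `ψ` of `G`, the rows `j ↦ ψ (A i j)` are pairwise
orthogonal nonzero vectors of `ℂ^J`, because each inner product of two distinct rows equals
`λ • ∑ g, ψ g = 0`; hence `m ≤ |J| = λ |G|`.

Sufficiency: in a field `F` of order `p^(n+s)`, any `m ≤ |F|` distinct rows of the multiplication
table `(x, y) ↦ x * y` form an `(F, m, 1)` difference matrix. Pushing it forward along a surjective
`𝔽_p`-linear map `F → 𝔽_p^n`, whose kernel has `p^s` elements, gives a `(𝔽_p^n, m, p^s)` one.
-/

lemma AddMonoidHom.natCard_fiber_eq_natCard_ker {G H : Type*} [AddGroup G] [AddGroup H]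
    (f : G →+ H) (x : G) : Nat.card {y // f y = f x} = Nat.card f.ker :=
  Nat.card_congr ((Equiv.addLeft x).subtypeEquiv fun k => by simp).symm

lemma AddMonoidHom.natCard_ker_mul_natCard_of_surjective {G H : Type*} [AddGroup G] [AddGroup H]
    {f : G →+ H} (hf : Function.Surjective f) : Nat.card f.ker * Nat.card H = Nat.card G := by
  rw [← f.ker.card_mul_index, AddSubgroup.index_ker, f.range_eq_top_of_surjective hf,
    AddSubgroup.card_top]

lemma exists_linearMap_surjective_of_le_finrank {K V : Type*} [DivisionRing K] [AddCommGroup V]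
    [Module K V] [FiniteDimensional K V] {n : ℕ} (hn : n ≤ Module.finrank K V) :
    ∃ π : V →ₗ[K] (Fin n → K), Function.Surjective π :=
  ⟨LinearMap.funLeft K K (Fin.castLE hn) ∘ₗ (Module.finBasis K V).equivFun.toLinearMap,
    (LinearMap.funLeft_surjective_of_injective (R := K) (M := K) _ (Fin.castLE_injective hn)).comp
      (Module.finBasis K V).equivFun.surjective⟩

namespace IsAddDiffMatrix

variable {G I J : Type*} {A : I → J → G} {lam : ℕ}

lemma comp_equiv [AddGroup G] {J' : Type*} (hA : IsAddDiffMatrix A lam) (e : J' ≃ J) :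
    IsAddDiffMatrix (fun i j => A i (e j)) lam :=
  ⟨(Nat.card_congr e).trans hA.1, fun i ℓ hiℓ g =>
    (Nat.card_congr (e.subtypeEquiv fun _ => Iff.rfl)).trans (hA.2 i ℓ hiℓ g)⟩

lemma sum_comp_sub [AddGroup G] [Fintype G] [Fintype J] {M : Type*} [AddCommMonoid M]
    (hA : IsAddDiffMatrix A lam) {i ℓ : I} (hiℓ : i ≠ ℓ) (f : G → M) :
    ∑ j, f (A i j - A ℓ j) = lam • ∑ g, f g := by
  classical
  rw [← Fintype.sum_fiberwise' (fun j => A i j - A ℓ j) f, Finset.smul_sum]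
  refine Fintype.sum_congr _ _ fun g => ?_
  rw [Finset.sum_const, Finset.card_univ, ← Nat.card_eq_fintype_card, hA.2 i ℓ hiℓ g]

theorem card_le [AddCommGroup G] [Fintype G] [Nontrivial G] [Fintype I] [Fintype J]
    [Nonempty J] (hA : IsAddDiffMatrix A lam) : Fintype.card I ≤ Fintype.card J := by
  obtain ⟨a, ha⟩ := exists_ne (0 : G)
  obtain ⟨ψ, hψ⟩ := AddChar.exists_apply_ne_zero.2 ha
  have hψsum : ∑ g, ψ g = 0 := AddChar.sum_eq_zero_iff_ne_zero.2 (AddChar.ne_zero_iff.2 ⟨a, hψ⟩)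
  let v : I → EuclideanSpace ℂ J := fun i => WithLp.toLp 2 fun j => ψ (A i j)
  have hv : ∀ i, v i ≠ 0 := fun i hi => by
    obtain ⟨j⟩ := ‹Nonempty J›
    have hψ0 : ψ (A i j) = 0 := by simpa [v] using congr_arg (· j) hi
    simpa [hψ0] using ψ.norm_apply (A i j)
  have hinner : ∀ i ℓ, inner ℂ (v i) (v ℓ) = ∑ j, ψ (A ℓ j - A i j) := fun i ℓ => by
    simp [v, PiLp.inner_apply, sub_eq_add_neg, AddChar.map_add_eq_mul, AddChar.map_neg_eq_conj]
  have horth : Pairwise fun i ℓ => inner ℂ (v i) (v ℓ) = 0 := fun i ℓ hiℓ => by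
    change inner ℂ (v i) (v ℓ) = 0
    rw [hinner, hA.sum_comp_sub hiℓ.symm, hψsum, smul_zero]
  simpa using (linearIndependent_of_ne_zero_of_inner_eq_zero hv horth).fintype_card_le_finrank

lemma map [AddGroup G] [Finite G] [Finite J] {H : Type*} [AddGroup H]
    (hA : IsAddDiffMatrix A lam) {f : G →+ H} (hf : Function.Surjective f) :
    IsAddDiffMatrix (fun i j => f (A i j)) (lam * Nat.card f.ker) := by
  classical
  have := Fintype.ofFinite G
  refine ⟨by rw [hA.1, mul_assoc, f.natCard_ker_mul_natCard_of_surjective hf], fun i ℓ hiℓ h => ?_⟩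
  obtain ⟨x, rfl⟩ := hf h
  have hsplit := Equiv.sigmaSubtypeFiberEquivSubtype (fun j => A i j - A ℓ j)
    (p := fun j => f (A i j) - f (A ℓ j) = f x) (q := fun g => f g = f x) fun j => by
      rw [map_sub]
  rw [← Nat.card_congr hsplit, Nat.card_sigma]
  simp only [hA.2 i ℓ hiℓ, Finset.sum_const, Finset.card_univ, ← Nat.card_eq_fintype_card,
    f.natCard_fiber_eq_natCard_ker, smul_eq_mul, mul_comm]

end IsAddDiffMatrix

lemma isAddDiffMatrix_mul_of_injective {F I : Type*} [DivisionRing F] {ρ : I → F}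
    (hρ : Function.Injective ρ) : IsAddDiffMatrix (fun i (x : F) => ρ i * x) 1 := by
  refine ⟨(one_mul _).symm, fun i ℓ hiℓ g => ?_⟩
  have hc : ρ i - ρ ℓ ≠ 0 := sub_ne_zero.2 (hρ.ne hiℓ)
  rw [Nat.card_eq_one_iff_exists]
  refine ⟨⟨(ρ i - ρ ℓ)⁻¹ * g, by rw [← sub_mul, mul_inv_cancel_left₀ hc]⟩, fun ⟨x, hx⟩ => ?_⟩
  rw [Subtype.mk.injEq, eq_inv_mul_iff_mul_eq₀ hc, sub_mul, hx]

theorem stmt_3_general (p : ℕ) (hp : p.Prime) (m n s : ℕ) (hn : 1 ≤ n) :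
    (∃ A : Fin m → Fin (p ^ s * p ^ n) → (Fin n → ZMod p), IsAddDiffMatrix A (p ^ s)) ↔
      m ≤ p ^ (n + s) := by
  have : Fact p.Prime := ⟨hp⟩
  have hN : p ^ s * p ^ n = p ^ (n + s) := by rw [pow_add, mul_comm]
  constructor
  · rintro ⟨A, hA⟩
    have : Nonempty (Fin n) := ⟨⟨0, hn⟩⟩
    have : Nonempty (Fin (p ^ s * p ^ n)) :=
      ⟨⟨0, Nat.mul_pos (pow_pos hp.pos s) (pow_pos hp.pos n)⟩⟩
    simpa [hN] using hA.card_le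
  · intro hm
    let F := GaloisField p (n + s)
    have hF : Nat.card F = p ^ s * p ^ n := by rw [GaloisField.card p (n + s) (by omega), hN]
    obtain ⟨π, hπ⟩ := exists_linearMap_surjective_of_le_finrank (K := ZMod p) (V := F) (n := n)
      (by rw [GaloisField.finrank p (by omega)]; omega)
    have hker : Nat.card π.toAddMonoidHom.ker = p ^ s := by
      have hcard := AddMonoidHom.natCard_ker_mul_natCard_of_surjective (f := π.toAddMonoidHom) hπ
      rw [hF, Nat.card_fun, Nat.card_zmod, Nat.card_fin] at hcard
      exact Nat.eq_of_mul_eq_mul_right (pow_pos hp.pos n) hcard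
    let e : Fin (p ^ s * p ^ n) ≃ F := (Finite.equivFinOfCardEq hF).symm
    have hρ := e.injective.comp (Fin.castLE_injective (hN ▸ hm))
    exact ⟨_, by simpa only [one_mul, hker] using
      ((isAddDiffMatrix_mul_of_injective hρ).map (f := π.toAddMonoidHom) hπ).comp_equiv e⟩

/-- There exists a `(Z_p^n, m, p^s)` difference matrix if and only if `m ≤ p^(n+s)`. -/
theorem stmt_3 (p : ℕ) (hp : p.Prime) (m n s : ℕ) (hm : 1 ≤ m) (hn : 1 ≤ n) :
    (∃ A : Fin m → Fin (p ^ s * p ^ n) → (Fin n → ZMod p), IsAddDiffMatrix A (p ^ s)) ↔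
      m ≤ p ^ (n + s) :=
  stmt_3_general p hp m n s hn
end

section
/- Let H and K be finite groups. If there exists an (H, m, λ) difference matrix and a (K, m, μ) difference matrix, then there exists an (H × K, m, λμ) difference matrix. -/
theorem stmt_5 {H K : Type*} [Group H] [Finite H] [Group K] [Finite K]
    {m c₁ c₂ lam mu : ℕ}
    (A : Fin m → Fin c₁ → H) (hA : IsDiffMatrix A lam)
    (B : Fin m → Fin c₂ → K) (hB : IsDiffMatrix B mu) :
    ∃ (c : ℕ) (C : Fin m → Fin c → H × K), IsDiffMatrix C (lam * mu) := by
  obtain ⟨hAc, hAd⟩ := hA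
  obtain ⟨hBc, hBd⟩ := hB
  refine ⟨c₁ * c₂,
    fun i j => (A i (finProdFinEquiv.symm j).1, B i (finProdFinEquiv.symm j).2), ?_, ?_⟩
  · rw [Nat.card_prod]
    simp only [Nat.card_eq_fintype_card, Fintype.card_fin] at hAc hBc ⊢
    rw [hAc, hBc]; ring
  · intro i ℓ hne g
    have e : {j : Fin (c₁ * c₂) //
        (A i (finProdFinEquiv.symm j).1, B i (finProdFinEquiv.symm j).2) *
        ((A ℓ (finProdFinEquiv.symm j).1, B ℓ (finProdFinEquiv.symm j).2))⁻¹ = g} ≃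
        {j : Fin c₁ // A i j * (A ℓ j)⁻¹ = g.1} × {k : Fin c₂ // B i k * (B ℓ k)⁻¹ = g.2} := by
      refine (Equiv.subtypeEquiv finProdFinEquiv.symm (fun j => ?_)).trans
        (Equiv.subtypeProdEquivProd)
      simp [Prod.ext_iff]
    rw [Nat.card_congr e, Nat.card_prod, hAd i ℓ hne g.1, hBd i ℓ hne g.2]
end

section
/- Let p be prime and let G be a finite abelian group of order p^n and exponent p^e. Then there exists a (G, p^{⌊n/e⌋}, 1) difference matrix. -/
def GoodDM (G : Type*) [AddCommGroup G] (m : ℕ) : Prop :=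
  ∃ f : Fin m → G → G, ∀ i ℓ : Fin m, i ≠ ℓ →
    Function.Bijective (fun g => f i g - f ℓ g)

lemma goodDM_of_subsingleton (G : Type*) [AddCommGroup G] [Subsingleton G] (m : ℕ) :
    GoodDM G m :=
  ⟨fun _ g => g, fun _ _ _ =>
    ⟨fun a b _ => Subsingleton.elim a b, fun a => ⟨a, Subsingleton.elim _ _⟩⟩⟩

lemma goodDM_one (G : Type*) [AddCommGroup G] : GoodDM G 1 :=
  ⟨fun _ g => g, fun i ℓ h => absurd (Subsingleton.elim i ℓ) h⟩

lemma goodDM_congr {G H : Type*} [AddCommGroup G] [AddCommGroup H] (φ : G ≃+ H) {m : ℕ}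
    (h : GoodDM H m) : GoodDM G m := by
  obtain ⟨f, hf⟩ := h
  refine ⟨fun i g => φ.symm (f i (φ g)), fun i ℓ hne => ?_⟩
  have : (fun g => φ.symm (f i (φ g)) - φ.symm (f ℓ (φ g)))
      = (φ.symm ∘ (fun h => f i h - f ℓ h) ∘ φ) := by
    funext g; simp [map_sub]
  rw [this]
  exact φ.symm.bijective.comp ((hf i ℓ hne).comp φ.bijective)

lemma goodDM_field (F : Type*) [Field F] [Finite F] {m : ℕ} (hm : m ≤ Nat.card F) :
    GoodDM F m := by
  let e : F ≃ Fin (Nat.card F) := Finite.equivFinOfCardEq rfl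
  let emb : Fin m → F := fun i => e.symm (Fin.castLE hm i)
  have hemb : Function.Injective emb :=
    e.symm.injective.comp (Fin.castLE_injective hm)
  refine ⟨fun i x => emb i * x, fun i ℓ hne => ?_⟩
  have hne' : emb i - emb ℓ ≠ 0 := sub_ne_zero.2 fun h => hne (hemb h)
  have : (fun x => emb i * x - emb ℓ * x) = fun x => (emb i - emb ℓ) * x := by
    funext x; rw [sub_mul]
  rw [this]
  exact (Equiv.mulLeft₀ _ hne').bijective

lemma goodDM_elem {p : ℕ} (hp : p.Prime) (G : Type*) [AddCommGroup G] [Finite G]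
    (h : ∀ g : G, p • g = 0) {m : ℕ} (hm : m ≤ Nat.card G) : GoodDM G m := by
  obtain ⟨q, rfl⟩ : ∃ q, p = q + 1 := ⟨p - 1, (Nat.succ_pred_eq_of_pos hp.pos).symm⟩
  set p := q + 1 with hpdef
  haveI : Fact p.Prime := ⟨hp⟩
  haveI : NeZero p := ⟨hp.ne_zero⟩
  letI : Module (ZMod p) G := AddCommGroup.zmodModule h
  haveI : Fintype G := Fintype.ofFinite G
  have hcard : Nat.card G = p ^ Module.finrank (ZMod p) G := by
    rw [Nat.card_eq_fintype_card, Module.card_eq_pow_finrank (K := ZMod p), ZMod.card]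
  rcases Nat.eq_zero_or_pos (Module.finrank (ZMod p) G) with h0 | hr
  · rw [h0, pow_zero] at hcard
    haveI : Subsingleton G := by
      rcases Nat.card_eq_one_iff_exists.mp hcard with ⟨x, hx⟩
      exact ⟨fun a b => (hx a).trans (hx b).symm⟩
    exact goodDM_of_subsingleton G m
  · haveI : Module.Finite (ZMod p) G := by infer_instance
    have hFr : Module.finrank (ZMod p) (GaloisField p (Module.finrank (ZMod p) G))
        = Module.finrank (ZMod p) G := GaloisField.finrank p hr.ne'
    have e : G ≃ₗ[ZMod p] GaloisField p (Module.finrank (ZMod p) G) :=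
      (Module.finBasis (ZMod p) G).equiv
        (Module.finBasis (ZMod p) (GaloisField p (Module.finrank (ZMod p) G)))
        (finCongr (by rw [hFr]))
    refine goodDM_congr e.toAddEquiv (goodDM_field _ ?_)
    rw [GaloisField.card p _ hr.ne', ← hcard]
    exact hm

lemma goodDM_comp {G Q : Type*} [AddCommGroup G] [AddCommGroup Q] (π : G →+ Q)
    (hs : Function.Surjective π) {m : ℕ} (hQ : GoodDM Q m) (hK : GoodDM (↥π.ker) m) :
    GoodDM G m := by
  obtain ⟨fQ, hfQ⟩ := hQ
  obtain ⟨fK, hfK⟩ := hK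
  set σ : Q → G := Function.surjInv hs with hσdef
  have hσ : ∀ q, π (σ q) = q := fun q => Function.surjInv_eq hs q
  -- the bijection E : Q × K ≃ G
  have hbij : Function.Bijective (fun qk : Q × ↥π.ker => σ qk.1 + ↑qk.2) := by
    constructor
    · rintro ⟨q, k⟩ ⟨q', k'⟩ hEq
      simp only at hEq
      have h1 : q = q' := by
        have := congrArg π hEq
        simpa [map_add, hσ, AddMonoidHom.mem_ker.mp k.2,
          AddMonoidHom.mem_ker.mp k'.2] using this
      subst h1
      have : (k : G) = k' := by
        exact add_left_cancel hEq
      exact Prod.ext rfl (Subtype.ext this)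
    · intro g
      refine ⟨⟨π g, ⟨g - σ (π g), ?_⟩⟩, by simp⟩
      simp [AddMonoidHom.mem_ker, map_sub, hσ]
  set E : Q × ↥π.ker ≃ G := Equiv.ofBijective _ hbij with hEdef
  refine ⟨fun i g => σ (fQ i (E.symm g).1) + ↑(fK i (E.symm g).2), fun i ℓ hne => ?_⟩
  have hdQ := hfQ i ℓ hne
  have hdK := hfK i ℓ hne
  have key : (fun g => (σ (fQ i (E.symm g).1) + ↑(fK i (E.symm g).2))
        - (σ (fQ ℓ (E.symm g).1) + ↑(fK ℓ (E.symm g).2)))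
      = (fun qk : Q × ↥π.ker =>
          (σ (fQ i qk.1) - σ (fQ ℓ qk.1)) + ↑(fK i qk.2 - fK ℓ qk.2)) ∘ E.symm := by
    funext g
    simp only [Function.comp_apply, AddSubgroup.coe_sub]
    abel
  rw [key]
  refine Function.Bijective.comp ?_ E.symm.bijective
  constructor
  · rintro ⟨q, k⟩ ⟨q', k'⟩ hEq
    simp only at hEq
    have h1 : q = q' := by
      apply hdQ.injective
      have := congrArg π hEq
      simpa [map_add, map_sub, hσ, AddMonoidHom.mem_ker.mp (fK i k).2,
        AddMonoidHom.mem_ker.mp (fK ℓ k).2, AddMonoidHom.mem_ker.mp (fK i k').2,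
        AddMonoidHom.mem_ker.mp (fK ℓ k').2] using this
    subst h1
    have h2 : fK i k - fK ℓ k = fK i k' - fK ℓ k' := by
      have := add_left_cancel hEq
      exact Subtype.ext (by exact_mod_cast this)
    exact Prod.ext rfl (hdK.injective h2)
  · intro g
    obtain ⟨q, hq⟩ := hdQ.surjective (π g)
    have hker : g - (σ (fQ i q) - σ (fQ ℓ q)) ∈ π.ker := by
      simp only [AddMonoidHom.mem_ker, map_sub, hσ]
      simp only at hq
      rw [← hq]
      abel
    obtain ⟨k, hk⟩ := hdK.surjective ⟨_, hker⟩
    refine ⟨(q, k), ?_⟩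
    simp only [hk]
    abel

-- single component p-divisibility lemma
lemma comp_psmul {p : ℕ} (hp : 0 < p) {a b : ℕ} (hba : b ≤ a) (hab : a ≤ b + 1)
    (y : ZMod (p ^ a)) (hy : ZMod.castHom (pow_dvd_pow p hba) (ZMod (p ^ b)) y = 0) :
    p • y = 0 := by
  haveI : NeZero (p ^ a) := ⟨pow_ne_zero _ hp.ne'⟩
  haveI : NeZero (p ^ b) := ⟨pow_ne_zero _ hp.ne'⟩
  have h1 : ((y.val : ℕ) : ZMod (p ^ b)) = 0 := by
    rw [ZMod.natCast_val, ← ZMod.castHom_apply (h := pow_dvd_pow p hba), hy]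
  have h2 : p ^ b ∣ y.val := (ZMod.natCast_eq_zero_iff _ _).mp h1
  have h3 : (p ^ a : ℕ) ∣ p * y.val := by
    obtain ⟨c, hc⟩ := h2
    exact dvd_trans (pow_dvd_pow p hab) ⟨c, by rw [hc, pow_succ]; ring⟩
  calc p • y = p • ((y.val : ℕ) : ZMod (p ^ a)) := by rw [ZMod.natCast_val, ZMod.cast_id]
    _ = ((p * y.val : ℕ) : ZMod (p ^ a)) := by push_cast [nsmul_eq_mul]; ring
    _ = 0 := (ZMod.natCast_eq_zero_iff _ _).mpr h3

lemma core (p : ℕ) (hp : p.Prime) (e : ℕ) :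
    ∀ (ι : Type) (_ : Fintype ι) (d : ι → ℕ), (∀ i, d i ≤ e) →
      ∀ k : ℕ, k * e ≤ ∑ i, d i → GoodDM (∀ i, ZMod (p ^ d i)) (p ^ k) := by
  induction e with
  | zero =>
    intro ι _ d hd k _
    haveI : ∀ i, Subsingleton (ZMod (p ^ d i)) := fun i => by
      rw [Nat.le_zero.mp (hd i), pow_zero]
      infer_instance
    exact goodDM_of_subsingleton _ _
  | succ e' IH =>
    intro ι inst d hd k hk
    classical
    set T := Finset.univ.filter (fun i => d i = e' + 1) with hTdef
    set supp := Finset.univ.filter (fun i => d i ≠ 0) with hsuppdef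
    have hTsupp : T ⊆ supp := by
      intro i hi
      simp only [hTdef, hsuppdef, Finset.mem_filter, Finset.mem_univ, true_and] at *
      omega
    have hsum_le : ∑ i, d i ≤ supp.card * (e' + 1) := by
      calc ∑ i, d i = ∑ i ∈ supp, d i := by
            rw [hsuppdef]; exact (Finset.sum_filter_ne_zero _).symm
        _ ≤ ∑ _i ∈ supp, (e' + 1) := Finset.sum_le_sum (fun i _ => hd i)
        _ = supp.card * (e' + 1) := by rw [Finset.sum_const, smul_eq_mul]
    have hk_supp : k ≤ supp.card :=
      Nat.le_of_mul_le_mul_right (le_trans hk hsum_le) (Nat.succ_pos e')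
    obtain ⟨S, hTS, hSsupp, hScard⟩ := Finset.exists_subsuperset_card_eq hTsupp
      (le_max_right k T.card) (max_le hk_supp (Finset.card_le_card hTsupp))
    have hSpos : ∀ i ∈ S, 1 ≤ d i := by
      intro i hi
      have := hSsupp hi
      simp only [hsuppdef, Finset.mem_filter] at this
      omega
    set d' : ι → ℕ := fun i => if i ∈ S then d i - 1 else d i with hd'def
    have hd'le : ∀ i, d' i ≤ d i := fun i => by
      simp only [hd'def]; split <;> omega
    have hd'succ : ∀ i, d i ≤ d' i + 1 := fun i => by
      simp only [hd'def]; split <;> omega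
    have hsum' : ∑ i, d i = (∑ i, d' i) + S.card := by
      have h1 : ∀ i ∈ Finset.univ (α := ι), d i = d' i + (if i ∈ S then 1 else 0) := by
        intro i _
        simp only [hd'def]
        by_cases hi : i ∈ S
        · have := hSpos i hi; simp [hi]; omega
        · simp [hi]
      rw [Finset.sum_congr rfl h1, Finset.sum_add_distrib]
      congr 1
      rw [Finset.sum_ite_mem, Finset.univ_inter, Finset.sum_const, smul_eq_mul, mul_one]
    -- the homomorphism
    set π : (∀ i, ZMod (p ^ d i)) →+ (∀ i, ZMod (p ^ d' i)) :=
      { toFun := fun g i => ZMod.castHom (pow_dvd_pow p (hd'le i)) (ZMod (p ^ d' i)) (g i)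
        map_zero' := by
          funext i
          exact map_zero (ZMod.castHom (pow_dvd_pow p (hd'le i)) (ZMod (p ^ d' i)))
        map_add' := by
          intro g h; funext i
          exact map_add (ZMod.castHom (pow_dvd_pow p (hd'le i)) (ZMod (p ^ d' i)))
            (g i) (h i) } with hπdef
    have hπsurj : Function.Surjective π := by
      intro y
      haveI : ∀ i, NeZero (p ^ d i) := fun i => ⟨pow_ne_zero _ hp.ne_zero⟩
      haveI : ∀ i, NeZero (p ^ d' i) := fun i => ⟨pow_ne_zero _ hp.ne_zero⟩
      refine ⟨fun i => ((y i).val : ZMod (p ^ d i)), ?_⟩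
      funext i
      simp only [hπdef, AddMonoidHom.coe_mk, ZeroHom.coe_mk, map_natCast]
      exact ZMod.natCast_rightInverse (y i)
    -- cardinalities
    haveI : ∀ i, NeZero (p ^ d i) := fun i => ⟨pow_ne_zero _ hp.ne_zero⟩
    have hcardG : Nat.card (∀ i, ZMod (p ^ d i)) = p ^ (∑ i, d i) := by
      rw [Nat.card_pi]
      simp only [Nat.card_zmod]
      rw [Finset.prod_pow_eq_pow_sum]
    have hcardQ : Nat.card (∀ i, ZMod (p ^ d' i)) = p ^ (∑ i, d' i) := by
      rw [Nat.card_pi]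
      simp only [Nat.card_zmod]
      rw [Finset.prod_pow_eq_pow_sum]
    have hcardK : Nat.card ↥π.ker = p ^ S.card := by
      have h1 : Nat.card (∀ i, ZMod (p ^ d i))
          = Nat.card ((∀ i, ZMod (p ^ d i)) ⧸ π.ker) * Nat.card ↥π.ker :=
        AddSubgroup.card_eq_card_quotient_mul_card_addSubgroup π.ker
      have h2 : Nat.card ((∀ i, ZMod (p ^ d i)) ⧸ π.ker) = Nat.card (∀ i, ZMod (p ^ d' i)) :=
        Nat.card_congr (QuotientAddGroup.quotientKerEquivOfSurjective π hπsurj).toEquiv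
      rw [h2, hcardQ, hcardG, hsum', pow_add] at h1
      exact (Nat.eq_of_mul_eq_mul_left (pow_pos hp.pos _) h1.symm)
    -- kernel is elementary
    have hker_elem : ∀ x : ↥π.ker, p • x = 0 := by
      rintro ⟨x, hx⟩
      rw [AddMonoidHom.mem_ker] at hx
      refine Subtype.ext ?_
      show p • x = 0
      funext i
      have hxi : ZMod.castHom (pow_dvd_pow p (hd'le i)) (ZMod (p ^ d' i)) (x i) = 0 :=
        congrFun hx i
      exact comp_psmul hp.pos (hd'le i) (hd'succ i) (x i) hxi
    -- kernel GoodDM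
    have hKgood : GoodDM (↥π.ker) (p ^ k) := by
      refine goodDM_elem hp _ hker_elem ?_
      rw [hcardK]
      exact Nat.pow_le_pow_right hp.pos (hScard ▸ le_max_left k T.card)
    -- quotient GoodDM via IH
    have hd'bound : ∀ i, d' i ≤ e' := by
      intro i
      simp only [hd'def]
      by_cases hi : i ∈ S
      · simp only [hi, if_true]; have := hd i; omega
      · simp only [hi, if_false]
        have hiT : i ∉ T := fun hiT => hi (hTS hiT)
        simp only [hTdef, Finset.mem_filter, Finset.mem_univ, true_and] at hiT
        have := hd i; omega
    have harith : k * e' ≤ ∑ i, d' i := by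
      rcases le_or_gt T.card k with hc | hc
      · have hSk : S.card = k := by rw [hScard, max_eq_left hc]
        have : k * (e' + 1) = k * e' + k := by ring
        omega
      · have hSk : S.card = T.card := by rw [hScard, max_eq_right hc.le]
        have hTsum : ∑ i, d i ≥ T.card * (e' + 1) := by
          calc T.card * (e' + 1) = ∑ i ∈ T, d i := by
                rw [Finset.sum_congr rfl (fun i hi => by
                  simp only [hTdef, Finset.mem_filter] at hi; rw [hi.2])]
                rw [Finset.sum_const, smul_eq_mul]
            _ ≤ ∑ i, d i := Finset.sum_le_sum_of_subset (Finset.subset_univ T)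
        have h1 : T.card * (e' + 1) = T.card * e' + T.card := by ring
        have h2 : k * e' ≤ T.card * e' := Nat.mul_le_mul_right e' hc.le
        omega
    have hQgood : GoodDM (∀ i, ZMod (p ^ d' i)) (p ^ k) := IH ι inst d' hd'bound k harith
    exact goodDM_comp π hπsurj hQgood hKgood

/-- If `G` is a finite abelian group of order `p^n` and exponent `p^e` (`p` prime), then
there exists a `(G, p^⌊n/e⌋, 1)` difference matrix. -/
theorem stmt_6 (p n e : ℕ) (hp : p.Prime) (G : Type*) [AddCommGroup G] [Finite G]
    (hcard : Nat.card G = p ^ n) (hexp : AddMonoid.exponent G = p ^ e) :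
    ∃ A : Fin (p ^ (n / e)) → Fin (Nat.card G) → G, IsAddDiffMatrix A 1 := by
  classical
  have main : GoodDM G (p ^ (n / e)) := by
    rcases Nat.eq_zero_or_pos e with he | he
    · rw [he, Nat.div_zero, pow_zero]
      exact goodDM_one G
    · obtain ⟨ι, hι, q, hq, a, ⟨φ⟩⟩ := AddCommGroup.equiv_directSum_zmod_of_finite G
      haveI := hι
      let ψ : G ≃+ ∀ i, ZMod (q i ^ a i) := φ.trans (DirectSum.addEquivProd _)
      have hprod : ∏ i, (q i ^ a i) = p ^ n := by
        have h1 := Nat.card_congr ψ.toEquiv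
        rw [hcard, Nat.card_pi] at h1
        simp only [Nat.card_zmod] at h1
        exact h1.symm
      have hqp : ∀ i, ∃ b, q i ^ a i = p ^ b := by
        intro i
        rcases Nat.eq_zero_or_pos (a i) with h0 | h1
        · exact ⟨0, by rw [h0, pow_zero, pow_zero]⟩
        · have hdvd : q i ∣ p ^ n := by
            rw [← hprod]
            exact dvd_trans (dvd_pow_self (q i) h1.ne')
              (Finset.dvd_prod_of_mem _ (Finset.mem_univ i))
          have hqi : q i = p :=
            (Nat.prime_dvd_prime_iff_eq (hq i) hp).mp ((hq i).dvd_of_dvd_pow hdvd)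
          exact ⟨a i, by rw [hqi]⟩
      choose d hd using hqp
      let χ : (∀ i, ZMod (q i ^ a i)) ≃+ (∀ i, ZMod (p ^ d i)) :=
        AddEquiv.piCongrRight (fun i => (ZMod.ringEquivCongr (hd i)).toAddEquiv)
      let Ψ : G ≃+ ∀ i, ZMod (p ^ d i) := ψ.trans χ
      have hexp' : ∀ x : (∀ i, ZMod (p ^ d i)), p ^ e • x = 0 := by
        intro x
        obtain ⟨g, rfl⟩ := Ψ.surjective x
        rw [← map_nsmul]
        have hg : p ^ e • g = 0 := by
          rw [← hexp]
          exact AddMonoid.exponent_nsmul_eq_zero g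
        rw [hg, map_zero]
      have hdle : ∀ i, d i ≤ e := by
        intro i
        haveI : NeZero (p ^ d i) := ⟨pow_ne_zero _ hp.ne_zero⟩
        have h1 := congrFun (hexp' (Pi.single i 1)) i
        rw [Pi.smul_apply, Pi.single_eq_same] at h1
        rw [nsmul_eq_mul, mul_one] at h1
        push_cast at h1
        have h3 : p ^ d i ∣ p ^ e := (ZMod.natCast_eq_zero_iff _ _).mp (by
          exact_mod_cast h1)
        exact (Nat.pow_dvd_pow_iff_le_right hp.one_lt).mp h3
      have hsum : ∑ i, d i = n := by
        have h1 : ∏ i, p ^ d i = p ^ n := by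
          rw [← hprod]
          exact Finset.prod_congr rfl (fun i _ => (hd i).symm)
        rw [Finset.prod_pow_eq_pow_sum] at h1
        exact Nat.pow_right_injective hp.two_le h1
      have harith : (n / e) * e ≤ ∑ i, d i := by
        rw [hsum]; exact Nat.div_mul_le_self n e
      exact goodDM_congr Ψ (core p hp e ι _ d hdle (n / e) harith)
  obtain ⟨f, hf⟩ := main
  let c : Fin (Nat.card G) ≃ G := (Finite.equivFinOfCardEq rfl).symm
  refine ⟨fun i j => f i (c j), by simp, ?_⟩
  intro i ℓ hne g
  have hb := hf i ℓ hne
  obtain ⟨x0, hx0⟩ := hb.surjective g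
  simp only at hx0
  haveI : Unique {j : Fin (Nat.card G) // f i (c j) - f ℓ (c j) = g} :=
    { default := ⟨c.symm x0, by rw [Equiv.apply_symm_apply]; exact hx0⟩
      uniq := fun y => Subtype.ext (by
        have h1 : c y.val = x0 := hb.injective (y.2.trans hx0.symm)
        have h2 : (y.val : Fin (Nat.card G)) = c.symm x0 := by
          rw [← h1, Equiv.symm_apply_apply]
        exact h2) }
  exact Nat.card_unique
end

section
/- Let G be a finite group and let p be the smallest prime divisor of |G|. Then there exists a (G, p, 1) difference matrix. -/
/-!
Take the rows `j ↦ c j ^ i` for `0 ≤ i < p`, where `c` enumerates `G`. The quotient of rows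
`i` and `ℓ` is `j ↦ c j ^ (i - ℓ)`, and `0 < |i - ℓ| < p` makes `i - ℓ` coprime to `|G|`, so
the power map `x ↦ x ^ (i - ℓ)` is a permutation of `G`: every element occurs exactly once.
-/

open Function

section PowerMatrix

variable {G : Type*} [Group G]

theorem Nat.Coprime.zpow_left_bijective {d : ℤ} (h : (Nat.card G).Coprime d.natAbs) :
    Bijective (· ^ d : G → G) := by
  rcases Int.natAbs_eq d with hd | hd <;> rw [hd]
  · simpa only [zpow_natCast] using h.pow_left_bijective
  · simpa only [zpow_neg, zpow_natCast, comp_def] using inv_bijective.comp h.pow_left_bijective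

theorem isDiffMatrix_one_of_bijective {I J : Type*} (A : I → J → G)
    (hJ : Nat.card J = Nat.card G)
    (hA : ∀ i ℓ, i ≠ ℓ → Bijective fun j => A i j * (A ℓ j)⁻¹) :
    IsDiffMatrix A 1 := by
  refine ⟨by rw [hJ, one_mul], fun i ℓ hiℓ g => Nat.card_eq_one_iff_unique.mpr ⟨?_, ?_⟩⟩
  · exact ⟨fun a b => Subtype.ext ((hA i ℓ hiℓ).injective (a.2.trans b.2.symm))⟩
  · obtain ⟨j, hj⟩ := (hA i ℓ hiℓ).surjective g
    exact ⟨⟨j, hj⟩⟩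

theorem isDiffMatrix_pow_of_le_minFac {J : Type*} {c : J → G} (hc : Bijective c) {m : ℕ}
    (hm : m ≤ (Nat.card G).minFac) :
    IsDiffMatrix (fun (i : Fin m) j => c j ^ (i : ℕ)) 1 := by
  refine isDiffMatrix_one_of_bijective _ (Nat.card_congr (Equiv.ofBijective c hc)) ?_
  intro i ℓ hiℓ
  have hne : (i : ℕ) ≠ ℓ := Fin.val_ne_of_ne hiℓ
  have hcop : (Nat.card G).Coprime ((i : ℤ) - ℓ).natAbs :=
    Nat.coprime_of_lt_minFac (by omega) (by omega)
  simpa only [← zpow_natCast, ← zpow_sub, comp_def] using hcop.zpow_left_bijective.comp hc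

end PowerMatrix

theorem stmt_7_general {G : Type*} [Group G] [Finite G]
    (p : ℕ) (hp : p = (Nat.card G).minFac) :
    ∃ A : Fin p → Fin (Nat.card G) → G, IsDiffMatrix A 1 := by
  obtain ⟨e⟩ : Nonempty (Fin (Nat.card G) ≃ G) := ⟨(Finite.equivFin G).symm⟩
  exact ⟨_, isDiffMatrix_pow_of_le_minFac e.bijective hp.le⟩

/-- If `p` is the smallest prime divisor of `|G|`, then there exists a `(G, p, 1)`
difference matrix. -/
theorem stmt_7 {G : Type*} [Group G] [Finite G] (hG : 1 < Nat.card G)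
    (p : ℕ) (hp : p = (Nat.card G).minFac) :
    ∃ A : Fin p → Fin (Nat.card G) → G, IsDiffMatrix A 1 :=
  stmt_7_general p hp
end

section
/- For every positive integer e, there exists a (Z_{2^e} × Z_2, 4, 1) difference matrix. -/
/-! ### Generic helpers -/

theorem card_fiber_eq_one {J G : Type*} (dm : J → G) (hd : Function.Bijective dm) (g : G) :
    Nat.card {j : J // dm j = g} = 1 := by
  obtain ⟨j0, hj0⟩ := hd.surjective g
  haveI : Nonempty {j : J // dm j = g} := ⟨⟨j0, hj0⟩⟩
  haveI : Subsingleton {j : J // dm j = g} :=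
    ⟨by rintro ⟨a, ha⟩ ⟨b, hb⟩; exact Subtype.ext (hd.injective (ha.trans hb.symm))⟩
  exact Nat.card_unique

theorem isAddDiffMatrix_of_bij {G J : Type*} [AddGroup G] (A : Fin 4 → J → G)
    (hcard : Nat.card J = Nat.card G)
    (hbij : ∀ i ℓ : Fin 4, i ≠ ℓ → Function.Bijective fun j => A i j - A ℓ j) :
    IsAddDiffMatrix A 1 :=
  ⟨by simpa using hcard, fun i ℓ hne g => card_fiber_eq_one _ (hbij i ℓ hne) g⟩

theorem bij_sub_symm {G J : Type*} [AddGroup G] {f g : J → G}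
    (h : Function.Bijective fun j => f j - g j) :
    Function.Bijective fun j => g j - f j := by
  have heq : (fun j => g j - f j) = (fun x : G => -x) ∘ fun j => f j - g j := by
    funext j; simp
  rw [heq]
  exact (Equiv.neg G).bijective.comp h

/-! ### Integer arithmetic helpers -/

theorem dvd_cancel_odd {m S : ℤ} (k : ℕ) (hm : Odd m) (h : (2 ^ k : ℤ) ∣ m * S) :
    (2 ^ k : ℤ) ∣ S := by
  have hc : IsCoprime ((2 : ℤ) ^ k) m := by
    rw [Int.isCoprime_iff_gcd_eq_one]
    have h1 : Nat.Coprime 2 m.natAbs := Nat.coprime_two_left.mpr (Int.natAbs_odd.mpr hm)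
    have h2 := Nat.Coprime.pow_left k h1
    simpa [Int.gcd, Int.natAbs_pow] using h2
  exact hc.dvd_of_dvd_mul_left h

theorem no_strict_multiple {Q S c : ℤ} (hQ : 0 < Q) (hc : S = Q * c) (h0 : 0 < S)
    (h1 : S < Q) : False := by
  rcases le_or_gt c 0 with h | h
  · have : Q * c ≤ Q * 0 := mul_le_mul_of_nonneg_left h hQ.le
    simp at this; omega
  · have : Q * 1 ≤ Q * c := mul_le_mul_of_nonneg_left (by omega) hQ.le
    simp at this; omega

theorem unit_cancel {q X Y : ℤ} (h : 4 * q ∣ (1 - 2 * q) * X - (1 - 2 * q) * Y) :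
    4 * q ∣ X - Y := by
  obtain ⟨k, hk⟩ := h
  exact ⟨(1 + 2 * q) * k + q * (X - Y), by linear_combination (1 + 2 * q) * hk⟩

theorem Scases (q : ℤ) (hq : 0 < q)
    (hcan4 : ∀ m S : ℤ, Odd m → 4 * q ∣ m * S → 4 * q ∣ S)
    {m S : ℤ} (hm : Odd m) (h0 : 0 < S) (h1 : S < 16 * q + 2)
    (h : 8 * q ∣ m * S - 4 * q) : S = 4 * q ∨ S = 12 * q := by
  obtain ⟨k, hk⟩ := h
  have h4 : 4 * q ∣ m * S := ⟨2 * k + 1, by linear_combination hk⟩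
  obtain ⟨S', hS'⟩ := hcan4 m S hm h4
  have hS'odd : Odd S' := by
    have hcc : (4 * q) * (m * S' - 1) = (4 * q) * (2 * k) := by
      linear_combination hk - m * hS'
    have h5 := mul_left_cancel₀ (show (4 * q : ℤ) ≠ 0 by omega) hcc
    have hms : Odd (m * S') := ⟨k, by linarith⟩
    exact (Int.odd_mul.mp hms).2
  have hb1 : 0 < S' := by
    rcases le_or_gt S' 0 with h | h
    · exfalso
      have : 4 * q * S' ≤ 4 * q * 0 := mul_le_mul_of_nonneg_left h (by omega)
      simp at this; omega
    · exact h
  have hb2 : S' < 5 := by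
    by_contra hcon
    push_neg at hcon
    have : 4 * q * 5 ≤ 4 * q * S' := mul_le_mul_of_nonneg_left hcon (by omega)
    omega
  have : S' = 1 ∨ S' = 3 := by
    rcases hS'odd with ⟨m', hm'⟩; omega
  rcases this with h | h
  · left; rw [hS', h]; ring
  · right; rw [hS', h]; ring

/-! ### Core injectivity lemmas.
`q = 2^d`, `n = 4q`, columns `z,w ∈ [0, 8q)`, `u = z(z+1)/2`, `y = z / (4q) ∈ {0,1}`. -/

section Core

variable {q z w uz uw yz yw : ℤ}

theorem core10 (hq : 0 < q)
    (hcan8 : ∀ m S : ℤ, Odd m → 8 * q ∣ m * S → 8 * q ∣ S)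
    (hz0 : 0 ≤ z) (hz8 : z < 8 * q) (hw0 : 0 ≤ w) (hw8 : w < 8 * q)
    (huz : 2 * uz = z * (z + 1)) (huw : 2 * uw = w * (w + 1))
    (hyz : (yz = 0 ∧ z < 4 * q) ∨ (yz = 1 ∧ 4 * q ≤ z))
    (hyw : (yw = 0 ∧ w < 4 * q) ∨ (yw = 1 ∧ 4 * q ≤ w))
    (h1 : 4 * q ∣ (1 - 2 * q) * uw - (1 - 2 * q) * uz)
    (h2 : (2 : ℤ) ∣ yw - yz) : z = w := by
  obtain ⟨k, hk⟩ := unit_cancel h1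
  have hprod : (w - z) * (w + z + 1) = 8 * q * k := by linear_combination 2 * hk - huw + huz
  rcases Int.even_or_odd (w - z) with he | ho
  · have hodd : Odd (w + z + 1) := by
      obtain ⟨t, ht⟩ := he; exact ⟨t + z, by linarith⟩
    have h8 : 8 * q ∣ w - z := hcan8 _ _ hodd ⟨k, by linear_combination hprod⟩
    have := Int.eq_zero_of_abs_lt_dvd h8 (by rw [abs_lt]; omega)
    omega
  · have h8 : 8 * q ∣ w + z + 1 := hcan8 _ _ ho ⟨k, hprod⟩
    obtain ⟨c, hc⟩ := h8
    exfalso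
    rcases hyz with ⟨hy0, hlt⟩ | ⟨hy1, hge⟩ <;> rcases hyw with ⟨hy0', hlt'⟩ | ⟨hy1', hge'⟩
    · exact no_strict_multiple (show (0:ℤ) < 8 * q by omega) hc (by omega) (by omega)
    · omega
    · omega
    · refine no_strict_multiple (show (0:ℤ) < 8 * q by omega)
        (show w + z + 1 - 8 * q = 8 * q * (c - 1) by linear_combination hc) (by omega) (by omega)

theorem core20 (hq : 0 < q)
    (hz0 : 0 ≤ z) (hz8 : z < 8 * q) (hw0 : 0 ≤ w) (hw8 : w < 8 * q)
    (hyz : (yz = 0 ∧ z < 4 * q) ∨ (yz = 1 ∧ 4 * q ≤ z))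
    (hyw : (yw = 0 ∧ w < 4 * q) ∨ (yw = 1 ∧ 4 * q ≤ w))
    (h1 : 4 * q ∣ (1 - 2 * q) * w - (1 - 2 * q) * z)
    (h2 : (2 : ℤ) ∣ (w + yw) - (z + yz)) : z = w := by
  obtain ⟨k, hk⟩ := unit_cancel h1
  have hk2 : k < 2 := by
    by_contra h; push_neg at h
    have : 4 * q * 2 ≤ 4 * q * k := mul_le_mul_of_nonneg_left h (by omega)
    omega
  have hk2' : -2 < k := by
    by_contra h; push_neg at h
    have : 4 * q * k ≤ 4 * q * (-2) := mul_le_mul_of_nonneg_left h (by omega)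
    omega
  obtain ⟨c, hc⟩ := h2
  have : k = -1 ∨ k = 0 ∨ k = 1 := by omega
  rcases this with rfl | rfl | rfl
  · exfalso
    have hwz : w - z = -(4 * q) := by linear_combination hk
    omega
  · have hwz : w - z = 0 := by linear_combination hk
    omega
  · exfalso
    have hwz : w - z = 4 * q := by linear_combination hk
    omega

theorem core30 (hq : 0 < q)
    (hcan8 : ∀ m S : ℤ, Odd m → 8 * q ∣ m * S → 8 * q ∣ S)
    (hcan4 : ∀ m S : ℤ, Odd m → 4 * q ∣ m * S → 4 * q ∣ S)
    (hz0 : 0 ≤ z) (hz8 : z < 8 * q) (hw0 : 0 ≤ w) (hw8 : w < 8 * q)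
    (huz : 2 * uz = z * (z + 1)) (huw : 2 * uw = w * (w + 1))
    (h1 : 4 * q ∣ (w + (1 - 2 * q) * uw) - (z + (1 - 2 * q) * uz))
    (h2 : (2 : ℤ) ∣ uw - uz) : z = w := by
  have hX : 4 * q ∣ (1 + 2 * q) * (w - z) + (uw - uz) := by
    obtain ⟨k, hk⟩ := h1
    exact ⟨(1 + 2 * q) * k + q * (uw - uz), by linear_combination (1 + 2 * q) * hk⟩
  obtain ⟨k, hk⟩ := hX
  have hprod : (w - z) * (w + z + 3) + 4 * q * (w - z) = 8 * q * k := by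
    linear_combination 2 * hk - huw + huz
  rcases Int.even_or_odd (w - z) with he | ho
  · obtain ⟨t, ht⟩ := he
    have hodd : Odd (w + z + 3) := ⟨t + z + 1, by linarith⟩
    have h8 : 8 * q ∣ w - z := by
      refine hcan8 _ _ hodd ⟨k - t, ?_⟩
      linear_combination hprod - 4 * q * ht
    have := Int.eq_zero_of_abs_lt_dvd h8 (by rw [abs_lt]; omega)
    omega
  · have hSd : 8 * q ∣ (w - z) * (w + z + 3) - 4 * q := by
      obtain ⟨m', hm'⟩ := ho
      exact ⟨k - (m' + 1), by linear_combination hprod - 4 * q * hm'⟩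
    have hScase := Scases q hq hcan4 ho (by omega) (by omega) hSd
    exfalso
    have hev : Even (w + z + 1) := by
      obtain ⟨m', hm'⟩ := ho; exact ⟨z + m' + 1, by linarith⟩
    obtain ⟨t, ht⟩ := hev
    have huu : uw - uz = (w - z) * t := by
      have h5 : 2 * (uw - uz) = 2 * ((w - z) * t) := by
        linear_combination huw - huz + (w - z) * ht
      exact mul_left_cancel₀ two_ne_zero h5
    have htodd : Odd t := by
      rcases hScase with hS | hS
      · exact ⟨q - 1, by omega⟩
      · exact ⟨3 * q - 1, by omega⟩
    have : Odd (uw - uz) := huu ▸ ho.mul htodd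
    obtain ⟨m', hm'⟩ := this
    obtain ⟨c, hc⟩ := h2
    omega

theorem core12 (hq : 0 < q)
    (hcan8 : ∀ m S : ℤ, Odd m → 8 * q ∣ m * S → 8 * q ∣ S)
    (hz0 : 0 ≤ z) (hz8 : z < 8 * q) (hw0 : 0 ≤ w) (hw8 : w < 8 * q)
    (huz : 2 * uz = z * (z + 1)) (huw : 2 * uw = w * (w + 1))
    (h1 : 4 * q ∣ ((1 - 2 * q) * uw - (1 - 2 * q) * w) - ((1 - 2 * q) * uz - (1 - 2 * q) * z))
    (h2 : (2 : ℤ) ∣ (yw - (w + yw)) - (yz - (z + yz))) : z = w := by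
  have h1' : 4 * q ∣ (1 - 2 * q) * (uw - w) - (1 - 2 * q) * (uz - z) := by
    obtain ⟨k, hk⟩ := h1; exact ⟨k, by linear_combination hk⟩
  obtain ⟨k, hk⟩ := unit_cancel h1'
  have hprod : (w - z) * (w + z - 1) = 8 * q * k := by linear_combination 2 * hk - huw + huz
  obtain ⟨c, hc⟩ := h2
  have hodd : Odd (w + z - 1) := ⟨z - c - 1, by linarith⟩
  have h8 : 8 * q ∣ w - z := hcan8 _ _ hodd ⟨k, by linear_combination hprod⟩
  have := Int.eq_zero_of_abs_lt_dvd h8 (by rw [abs_lt]; omega)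
  omega

theorem core13 (hq : 0 < q)
    (hz0 : 0 ≤ z) (hz8 : z < 8 * q) (hw0 : 0 ≤ w) (hw8 : w < 8 * q)
    (huz : 2 * uz = z * (z + 1)) (huw : 2 * uw = w * (w + 1))
    (hyz : (yz = 0 ∧ z < 4 * q) ∨ (yz = 1 ∧ 4 * q ≤ z))
    (hyw : (yw = 0 ∧ w < 4 * q) ∨ (yw = 1 ∧ 4 * q ≤ w))
    (h1 : 4 * q ∣ ((1 - 2 * q) * uw - (w + (1 - 2 * q) * uw)) -
      ((1 - 2 * q) * uz - (z + (1 - 2 * q) * uz)))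
    (h2 : (2 : ℤ) ∣ (yw - uw) - (yz - uz)) : z = w := by
  have hzw : 4 * q ∣ w - z := by
    obtain ⟨k, hk⟩ := h1; exact ⟨-k, by linear_combination -hk⟩
  obtain ⟨k, hk⟩ := hzw
  have hk2 : k < 2 := by
    by_contra h; push_neg at h
    have : 4 * q * 2 ≤ 4 * q * k := mul_le_mul_of_nonneg_left h (by omega)
    omega
  have hk2' : -2 < k := by
    by_contra h; push_neg at h
    have : 4 * q * k ≤ 4 * q * (-2) := mul_le_mul_of_nonneg_left h (by omega)
    omega
  obtain ⟨c, hc⟩ := h2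
  have hk3 : k = -1 ∨ k = 0 ∨ k = 1 := by omega
  rcases hk3 with rfl | rfl | rfl
  · exfalso
    have hwz' : z - w = 4 * q := by linear_combination -hk
    have h5 : 2 * (uz - uw) = 2 * ((2 * q * w + 4 * q * q + q) + (2 * q * w + 4 * q * q + q)) := by
      linear_combination huz - huw + (z + w + 1 + 4 * q) * hwz'
    have hev : Even (uz - uw) := ⟨2 * q * w + 4 * q * q + q,
      mul_left_cancel₀ two_ne_zero h5⟩
    obtain ⟨t, ht⟩ := hev
    omega
  · have hwz : w - z = 0 := by linear_combination hk
    omega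
  · exfalso
    have hwz' : w - z = 4 * q := by linear_combination hk
    have h5 : 2 * (uw - uz) = 2 * ((2 * q * z + 4 * q * q + q) + (2 * q * z + 4 * q * q + q)) := by
      linear_combination huw - huz + (w + z + 1 + 4 * q) * hwz'
    have hev : Even (uw - uz) := ⟨2 * q * z + 4 * q * q + q,
      mul_left_cancel₀ two_ne_zero h5⟩
    obtain ⟨t, ht⟩ := hev
    omega

theorem core23 (hq : 0 < q)
    (hcan8 : ∀ m S : ℤ, Odd m → 8 * q ∣ m * S → 8 * q ∣ S)
    (hcan4 : ∀ m S : ℤ, Odd m → 4 * q ∣ m * S → 4 * q ∣ S)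
    (hz0 : 0 ≤ z) (hz8 : z < 8 * q) (hw0 : 0 ≤ w) (hw8 : w < 8 * q)
    (huz : 2 * uz = z * (z + 1)) (huw : 2 * uw = w * (w + 1))
    (hyz : (yz = 0 ∧ z < 4 * q) ∨ (yz = 1 ∧ 4 * q ≤ z))
    (hyw : (yw = 0 ∧ w < 4 * q) ∨ (yw = 1 ∧ 4 * q ≤ w))
    (h1 : 4 * q ∣ ((1 - 2 * q) * w - (w + (1 - 2 * q) * uw)) -
      ((1 - 2 * q) * z - (z + (1 - 2 * q) * uz)))
    (h2 : (2 : ℤ) ∣ ((w + yw) - uw) - ((z + yz) - uz)) : z = w := by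
  have hX : 4 * q ∣ 2 * q * (w - z) + (uw - uz) := by
    obtain ⟨k, hk⟩ := h1
    exact ⟨-(1 + 2 * q) * k - q * (w - z) + q * (uw - uz), by linear_combination (-(1 + 2 * q)) * hk⟩
  obtain ⟨k, hk⟩ := hX
  have hprod : (w - z) * (w + z + 1) + 4 * q * (w - z) = 8 * q * k := by
    linear_combination 2 * hk - huw + huz
  rcases Int.even_or_odd (w - z) with he | ho
  · obtain ⟨t, ht⟩ := he
    have hodd : Odd (w + z + 1) := ⟨t + z, by linarith⟩
    have h8 : 8 * q ∣ w - z := by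
      refine hcan8 _ _ hodd ⟨k - t, ?_⟩
      linear_combination hprod - 4 * q * ht
    have := Int.eq_zero_of_abs_lt_dvd h8 (by rw [abs_lt]; omega)
    omega
  · have hSd : 8 * q ∣ (w - z) * (w + z + 1) - 4 * q := by
      obtain ⟨m', hm'⟩ := ho
      exact ⟨k - (m' + 1), by linear_combination hprod - 4 * q * hm'⟩
    have hScase := Scases q hq hcan4 ho (by omega) (by omega) hSd
    exfalso
    obtain ⟨m', hm'⟩ := ho
    rcases hScase with hS | hS
    · -- w + z + 1 = 4q : both y's are 0, u difference even
      have hyz0 : yz = 0 := by rcases hyz with ⟨h, h'⟩ | ⟨h, h'⟩ <;> omega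
      have hyw0 : yw = 0 := by rcases hyw with ⟨h, h'⟩ | ⟨h, h'⟩ <;> omega
      have huu : uw - uz = (w - z) * (2 * q) := by
        have h5 : 2 * (uw - uz) = 2 * ((w - z) * (2 * q)) := by
          linear_combination huw - huz + (w - z) * hS
        exact mul_left_cancel₀ two_ne_zero h5
      have hev : Even (uw - uz) := ⟨(w - z) * q, by linear_combination huu⟩
      obtain ⟨t, ht⟩ := hev
      obtain ⟨c, hc⟩ := h2
      omega
    · -- w + z + 1 = 12q : both y's are 1, u difference even
      have hyz1 : yz = 1 := by rcases hyz with ⟨h, h'⟩ | ⟨h, h'⟩ <;> omega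
      have hyw1 : yw = 1 := by rcases hyw with ⟨h, h'⟩ | ⟨h, h'⟩ <;> omega
      have huu : uw - uz = (w - z) * (6 * q) := by
        have h5 : 2 * (uw - uz) = 2 * ((w - z) * (6 * q)) := by
          linear_combination huw - huz + (w - z) * hS
        exact mul_left_cancel₀ two_ne_zero h5
      have hev : Even (uw - uz) := ⟨(w - z) * (3 * q), by linear_combination huu⟩
      obtain ⟨t, ht⟩ := hev
      obtain ⟨c, hc⟩ := h2
      omega

end Core

/-! ### The construction for `e = d + 2` -/

def colZ (d : ℕ) (j : Fin (2 ^ (d + 2) * 2)) : ℤ := (j.val : ℤ)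
def colU (d : ℕ) (j : Fin (2 ^ (d + 2) * 2)) : ℤ := ((j.val * (j.val + 1) / 2 : ℕ) : ℤ)
def colY (d : ℕ) (j : Fin (2 ^ (d + 2) * 2)) : ℤ := ((j.val / 2 ^ (d + 2) : ℕ) : ℤ)

def Pmat (d : ℕ) : Fin 4 → Fin (2 ^ (d + 2) * 2) → ℤ :=
  ![fun _ => 0,
    fun j => (1 - 2 * 2 ^ d) * colU d j,
    fun j => (1 - 2 * 2 ^ d) * colZ d j,
    fun j => colZ d j + (1 - 2 * 2 ^ d) * colU d j]

def Smat (d : ℕ) : Fin 4 → Fin (2 ^ (d + 2) * 2) → ℤ :=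
  ![fun _ => 0,
    fun j => colY d j,
    fun j => colZ d j + colY d j,
    fun j => colU d j]

def Amat (d : ℕ) : Fin 4 → Fin (2 ^ (d + 2) * 2) → ZMod (2 ^ (d + 2)) × ZMod 2 :=
  fun i j => (((Pmat d i j : ℤ) : ZMod (2 ^ (d + 2))), ((Smat d i j : ℤ) : ZMod 2))

theorem colfacts (d : ℕ) (j : Fin (2 ^ (d + 2) * 2)) :
    0 ≤ colZ d j ∧ colZ d j < 8 * 2 ^ d ∧ 2 * colU d j = colZ d j * (colZ d j + 1) ∧
      ((colY d j = 0 ∧ colZ d j < 4 * 2 ^ d) ∨ (colY d j = 1 ∧ 4 * 2 ^ d ≤ colZ d j)) := by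
  unfold colZ colU colY
  have hcast : ((2 ^ (d + 2) * 2 : ℕ) : ℤ) = 8 * 2 ^ d := by push_cast; ring
  have hcast2 : ((2 ^ (d + 2) : ℕ) : ℤ) = 4 * 2 ^ d := by push_cast; ring
  refine ⟨Int.natCast_nonneg _, ?_, ?_, ?_⟩
  · rw [← hcast]; exact_mod_cast j.isLt
  · have h2 : 2 * (j.val * (j.val + 1) / 2) = j.val * (j.val + 1) :=
      Nat.mul_div_cancel' (Nat.even_mul_succ_self j.val).two_dvd
    have h3 : ((2 * (j.val * (j.val + 1) / 2) : ℕ) : ℤ) = ((j.val * (j.val + 1) : ℕ) : ℤ) := by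
      rw [h2]
    exact_mod_cast h3
  · rcases Nat.lt_or_ge j.val (2 ^ (d + 2)) with h | h
    · left
      constructor
      · simp [Nat.div_eq_of_lt h]
      · rw [← hcast2]; exact_mod_cast h
    · right
      constructor
      · have hlt : j.val < (1 + 1) * 2 ^ (d + 2) := by
          have := j.isLt; omega
        have h4 : j.val / 2 ^ (d + 2) = 1 :=
          Nat.div_eq_of_lt_le (by simpa using h) hlt
        simp [h4]
      · rw [← hcast2]; exact_mod_cast h

theorem bij_of_inj {d : ℕ} (f : Fin (2 ^ (d + 2) * 2) → ZMod (2 ^ (d + 2)) × ZMod 2)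
    (h : Function.Injective f) : Function.Bijective f := by
  haveI : NeZero (2 ^ (d + 2)) := ⟨by positivity⟩
  rw [Fintype.bijective_iff_injective_and_card]
  refine ⟨h, ?_⟩
  simp [ZMod.card]

theorem inj_of_core {d : ℕ} (F S : Fin (2 ^ (d + 2) * 2) → ℤ)
    (hcore : ∀ j k : Fin (2 ^ (d + 2) * 2),
      ((2 ^ (d + 2) : ℕ) : ℤ) ∣ F k - F j → (2 : ℤ) ∣ S k - S j → j = k) :
    Function.Injective fun j => (((F j : ℤ) : ZMod (2 ^ (d + 2))), ((S j : ℤ) : ZMod 2)) := by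
  intro j k h
  rw [Prod.mk.injEq] at h
  obtain ⟨hA, hB⟩ := h
  have h1 : ((2 ^ (d + 2) : ℕ) : ℤ) ∣ F k - F j :=
    (ZMod.intCast_eq_intCast_iff_dvd_sub _ _ _).mp hA
  have h2' : ((2 : ℕ) : ℤ) ∣ S k - S j :=
    (ZMod.intCast_eq_intCast_iff_dvd_sub _ _ _).mp hB
  exact hcore j k h1 (by exact_mod_cast h2')

theorem bijD (d : ℕ) (i i' : Fin 4)
    (hcore : ∀ j k : Fin (2 ^ (d + 2) * 2),
      ((2 ^ (d + 2) : ℕ) : ℤ) ∣ (Pmat d i k - Pmat d i' k) - (Pmat d i j - Pmat d i' j) →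
      (2 : ℤ) ∣ (Smat d i k - Smat d i' k) - (Smat d i j - Smat d i' j) → j = k) :
    Function.Bijective fun j => Amat d i j - Amat d i' j := by
  have heq : (fun j => Amat d i j - Amat d i' j) =
      fun j => (((Pmat d i j - Pmat d i' j : ℤ) : ZMod (2 ^ (d + 2))),
        ((Smat d i j - Smat d i' j : ℤ) : ZMod 2)) := by
    funext j
    simp only [Amat, Prod.mk_sub_mk, Prod.mk.injEq]
    constructor <;> push_cast <;> ring
  rw [heq]
  exact bij_of_inj _ (inj_of_core _ _ hcore)

/-! ### Main theorem -/

theorem stmt_8 (e : ℕ) (he : 0 < e) :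
    ∃ A : Fin 4 → Fin (2 ^ e * 2) → ZMod (2 ^ e) × ZMod 2, IsAddDiffMatrix A 1 := by
  by_cases he1 : e = 1
  · subst he1
    refine ⟨(![![(0,0),(0,0),(0,0),(0,0)],
        ![(0,0),(1,0),(0,1),(1,1)],
        ![(0,0),(0,1),(1,1),(1,0)],
        ![(0,0),(1,1),(1,0),(0,1)]] : Fin 4 → Fin (2 ^ 1 * 2) → ZMod (2 ^ 1) × ZMod 2), ?_⟩
    apply isAddDiffMatrix_of_bij
    · simp [Nat.card_eq_fintype_card, Nat.card_prod, Nat.card_zmod]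
    · decide
  · obtain ⟨d, rfl⟩ : ∃ d, e = d + 2 := ⟨e - 2, by omega⟩
    refine ⟨Amat d, ?_⟩
    apply isAddDiffMatrix_of_bij
    · haveI : NeZero (2 ^ (d + 2)) := ⟨by positivity⟩
      simp [Nat.card_eq_fintype_card, Nat.card_prod, Nat.card_zmod]
    · -- set up cancellation oracles
      have hq : (0 : ℤ) < 2 ^ d := by positivity
      have hcan8 : ∀ m S : ℤ, Odd m → 8 * 2 ^ d ∣ m * S → 8 * 2 ^ d ∣ S := by
        intro m S hm h
        have e8 : ((2 : ℤ) ^ (d + 3)) = 8 * 2 ^ d := by ring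
        rw [← e8] at h ⊢
        exact dvd_cancel_odd (d + 3) hm h
      have hcan4 : ∀ m S : ℤ, Odd m → 4 * 2 ^ d ∣ m * S → 4 * 2 ^ d ∣ S := by
        intro m S hm h
        have e4 : ((2 : ℤ) ^ (d + 2)) = 4 * 2 ^ d := by ring
        rw [← e4] at h ⊢
        exact dvd_cancel_odd (d + 2) hm h
      have hmodeq : ((2 ^ (d + 2) : ℕ) : ℤ) = 4 * 2 ^ d := by push_cast; ring
      -- the six base bijections
      have B10 : Function.Bijective fun j => Amat d 1 j - Amat d 0 j := by
        apply bijD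
        intro j k h1 h2
        obtain ⟨hz0, hz8, huz, hyz⟩ := colfacts d j
        obtain ⟨hw0, hw8, huw, hyw⟩ := colfacts d k
        have h1' : (4 * 2 ^ d : ℤ) ∣ (1 - 2 * 2 ^ d) * colU d k - (1 - 2 * 2 ^ d) * colU d j := by
          rw [hmodeq] at h1
          obtain ⟨c, hc⟩ := h1
          refine ⟨c, ?_⟩
          simp only [Pmat, Matrix.cons_val_zero, Matrix.cons_val_one, Matrix.cons_val_two,
                Matrix.cons_val_three, Matrix.head_cons, Matrix.tail_cons] at hc
          linear_combination hc
        have h2' : (2 : ℤ) ∣ colY d k - colY d j := by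
          obtain ⟨c, hc⟩ := h2
          refine ⟨c, ?_⟩
          simp only [Smat, Matrix.cons_val_zero, Matrix.cons_val_one, Matrix.cons_val_two,
                Matrix.cons_val_three, Matrix.head_cons, Matrix.tail_cons] at hc
          linear_combination hc
        refine Fin.ext ?_
        have hzw := core10 hq hcan8 hz0 hz8 hw0 hw8 huz huw hyz hyw h1' h2'
        have : ((j.val : ℕ) : ℤ) = ((k.val : ℕ) : ℤ) := hzw
        exact_mod_cast this
      have B20 : Function.Bijective fun j => Amat d 2 j - Amat d 0 j := by
        apply bijD
        intro j k h1 h2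
        obtain ⟨hz0, hz8, huz, hyz⟩ := colfacts d j
        obtain ⟨hw0, hw8, huw, hyw⟩ := colfacts d k
        have h1' : (4 * 2 ^ d : ℤ) ∣ (1 - 2 * 2 ^ d) * colZ d k - (1 - 2 * 2 ^ d) * colZ d j := by
          rw [hmodeq] at h1
          obtain ⟨c, hc⟩ := h1
          refine ⟨c, ?_⟩
          simp only [Pmat, Matrix.cons_val_zero, Matrix.cons_val_one, Matrix.cons_val_two,
                Matrix.cons_val_three, Matrix.head_cons, Matrix.tail_cons] at hc
          linear_combination hc
        have h2' : (2 : ℤ) ∣ (colZ d k + colY d k) - (colZ d j + colY d j) := by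
          obtain ⟨c, hc⟩ := h2
          refine ⟨c, ?_⟩
          simp only [Smat, Matrix.cons_val_zero, Matrix.cons_val_one, Matrix.cons_val_two,
                Matrix.cons_val_three, Matrix.head_cons, Matrix.tail_cons] at hc
          linear_combination hc
        refine Fin.ext ?_
        have hzw := core20 hq hz0 hz8 hw0 hw8 hyz hyw h1' h2'
        have : ((j.val : ℕ) : ℤ) = ((k.val : ℕ) : ℤ) := hzw
        exact_mod_cast this
      have B30 : Function.Bijective fun j => Amat d 3 j - Amat d 0 j := by
        apply bijD
        intro j k h1 h2
        obtain ⟨hz0, hz8, huz, hyz⟩ := colfacts d j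
        obtain ⟨hw0, hw8, huw, hyw⟩ := colfacts d k
        have h1' : (4 * 2 ^ d : ℤ) ∣ (colZ d k + (1 - 2 * 2 ^ d) * colU d k) - (colZ d j + (1 - 2 * 2 ^ d) * colU d j) := by
          rw [hmodeq] at h1
          obtain ⟨c, hc⟩ := h1
          refine ⟨c, ?_⟩
          simp only [Pmat, Matrix.cons_val_zero, Matrix.cons_val_one, Matrix.cons_val_two,
                Matrix.cons_val_three, Matrix.head_cons, Matrix.tail_cons] at hc
          linear_combination hc
        have h2' : (2 : ℤ) ∣ colU d k - colU d j := by
          obtain ⟨c, hc⟩ := h2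
          refine ⟨c, ?_⟩
          simp only [Smat, Matrix.cons_val_zero, Matrix.cons_val_one, Matrix.cons_val_two,
                Matrix.cons_val_three, Matrix.head_cons, Matrix.tail_cons] at hc
          linear_combination hc
        refine Fin.ext ?_
        have hzw := core30 hq hcan8 hcan4 hz0 hz8 hw0 hw8 huz huw h1' h2'
        have : ((j.val : ℕ) : ℤ) = ((k.val : ℕ) : ℤ) := hzw
        exact_mod_cast this
      have B12 : Function.Bijective fun j => Amat d 1 j - Amat d 2 j := by
        apply bijD
        intro j k h1 h2
        obtain ⟨hz0, hz8, huz, hyz⟩ := colfacts d j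
        obtain ⟨hw0, hw8, huw, hyw⟩ := colfacts d k
        have h1' : (4 * 2 ^ d : ℤ) ∣ ((1 - 2 * 2 ^ d) * colU d k - (1 - 2 * 2 ^ d) * colZ d k) - ((1 - 2 * 2 ^ d) * colU d j - (1 - 2 * 2 ^ d) * colZ d j) := by
          rw [hmodeq] at h1
          obtain ⟨c, hc⟩ := h1
          refine ⟨c, ?_⟩
          simp only [Pmat, Matrix.cons_val_zero, Matrix.cons_val_one, Matrix.cons_val_two,
                Matrix.cons_val_three, Matrix.head_cons, Matrix.tail_cons] at hc
          linear_combination hc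
        have h2' : (2 : ℤ) ∣ (colY d k - (colZ d k + colY d k)) - (colY d j - (colZ d j + colY d j)) := by
          obtain ⟨c, hc⟩ := h2
          refine ⟨c, ?_⟩
          simp only [Smat, Matrix.cons_val_zero, Matrix.cons_val_one, Matrix.cons_val_two,
                Matrix.cons_val_three, Matrix.head_cons, Matrix.tail_cons] at hc
          linear_combination hc
        refine Fin.ext ?_
        have hzw := core12 hq hcan8 hz0 hz8 hw0 hw8 huz huw h1' h2'
        have : ((j.val : ℕ) : ℤ) = ((k.val : ℕ) : ℤ) := hzw
        exact_mod_cast this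
      have B13 : Function.Bijective fun j => Amat d 1 j - Amat d 3 j := by
        apply bijD
        intro j k h1 h2
        obtain ⟨hz0, hz8, huz, hyz⟩ := colfacts d j
        obtain ⟨hw0, hw8, huw, hyw⟩ := colfacts d k
        have h1' : (4 * 2 ^ d : ℤ) ∣ ((1 - 2 * 2 ^ d) * colU d k - (colZ d k + (1 - 2 * 2 ^ d) * colU d k)) - ((1 - 2 * 2 ^ d) * colU d j - (colZ d j + (1 - 2 * 2 ^ d) * colU d j)) := by
          rw [hmodeq] at h1
          obtain ⟨c, hc⟩ := h1
          refine ⟨c, ?_⟩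
          simp only [Pmat, Matrix.cons_val_zero, Matrix.cons_val_one, Matrix.cons_val_two,
                Matrix.cons_val_three, Matrix.head_cons, Matrix.tail_cons] at hc
          linear_combination hc
        have h2' : (2 : ℤ) ∣ (colY d k - colU d k) - (colY d j - colU d j) := by
          obtain ⟨c, hc⟩ := h2
          refine ⟨c, ?_⟩
          simp only [Smat, Matrix.cons_val_zero, Matrix.cons_val_one, Matrix.cons_val_two,
                Matrix.cons_val_three, Matrix.head_cons, Matrix.tail_cons] at hc
          linear_combination hc
        refine Fin.ext ?_
        have hzw := core13 hq hz0 hz8 hw0 hw8 huz huw hyz hyw h1' h2'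
        have : ((j.val : ℕ) : ℤ) = ((k.val : ℕ) : ℤ) := hzw
        exact_mod_cast this
      have B23 : Function.Bijective fun j => Amat d 2 j - Amat d 3 j := by
        apply bijD
        intro j k h1 h2
        obtain ⟨hz0, hz8, huz, hyz⟩ := colfacts d j
        obtain ⟨hw0, hw8, huw, hyw⟩ := colfacts d k
        have h1' : (4 * 2 ^ d : ℤ) ∣ ((1 - 2 * 2 ^ d) * colZ d k - (colZ d k + (1 - 2 * 2 ^ d) * colU d k)) - ((1 - 2 * 2 ^ d) * colZ d j - (colZ d j + (1 - 2 * 2 ^ d) * colU d j)) := by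
          rw [hmodeq] at h1
          obtain ⟨c, hc⟩ := h1
          refine ⟨c, ?_⟩
          simp only [Pmat, Matrix.cons_val_zero, Matrix.cons_val_one, Matrix.cons_val_two,
                Matrix.cons_val_three, Matrix.head_cons, Matrix.tail_cons] at hc
          linear_combination hc
        have h2' : (2 : ℤ) ∣ ((colZ d k + colY d k) - colU d k) - ((colZ d j + colY d j) - colU d j) := by
          obtain ⟨c, hc⟩ := h2
          refine ⟨c, ?_⟩
          simp only [Smat, Matrix.cons_val_zero, Matrix.cons_val_one, Matrix.cons_val_two,
                Matrix.cons_val_three, Matrix.head_cons, Matrix.tail_cons] at hc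
          linear_combination hc
        refine Fin.ext ?_
        have hzw := core23 hq hcan8 hcan4 hz0 hz8 hw0 hw8 huz huw hyz hyw h1' h2'
        have : ((j.val : ℕ) : ℤ) = ((k.val : ℕ) : ℤ) := hzw
        exact_mod_cast this
      intro i ℓ hne
      fin_cases i <;> fin_cases ℓ <;>
        first
          | exact absurd rfl hne
          | exact B10 | exact B20 | exact B30 | exact B12 | exact B13 | exact B23
          | exact bij_sub_symm B10 | exact bij_sub_symm B20 | exact bij_sub_symm B30
          | exact bij_sub_symm B12 | exact bij_sub_symm B13 | exact bij_sub_symm B23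
end

section
/- Let G be a finite group. If there exist a (G, m, λ) difference matrix and a (G, m', μ) difference matrix, then there exists a (G, mm', λμ|G|) difference matrix. -/
lemma card_subtype_prod_snd {α β : Type*} [Fintype α] [Fintype β] (P : α → β → Prop)
    [∀ a b, Decidable (P a b)] {k : ℕ} (h : ∀ a, Nat.card {b : β // P a b} = k) :
    Nat.card {x : α × β // P x.1 x.2} = Fintype.card α * k := by
  rw [Nat.card_congr (Equiv.subtypeProdEquivSigmaSubtype P), Nat.card_eq_fintype_card,
    Fintype.card_sigma]
  have : ∀ a : α, Fintype.card {b : β // P a b} = k := by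
    intro a; rw [← Nat.card_eq_fintype_card, h a]
  simp [this, Finset.sum_const]

theorem stmt_11 {G : Type*} [Group G] [Finite G] {m m' c₁ c₂ lam mu : ℕ}
    (A : Fin m → Fin c₁ → G) (hA : IsDiffMatrix A lam)
    (B : Fin m' → Fin c₂ → G) (hB : IsDiffMatrix B mu) :
    ∃ (c : ℕ) (C : Fin (m * m') → Fin c → G),
      IsDiffMatrix C (lam * mu * Nat.card G) := by
  classical
  obtain ⟨hc₁, hA2⟩ := hA
  obtain ⟨hc₂, hB2⟩ := hB
  simp only [Nat.card_eq_fintype_card, Fintype.card_fin] at hc₁ hc₂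
  refine ⟨c₁ * c₂, fun p q =>
    B (finProdFinEquiv.symm p).2 (finProdFinEquiv.symm q).2 *
      A (finProdFinEquiv.symm p).1 (finProdFinEquiv.symm q).1, ?_, ?_⟩
  · simp only [Nat.card_eq_fintype_card, Fintype.card_fin]
    rw [hc₁, hc₂]; ring
  · intro p p' hpp' g
    set i := (finProdFinEquiv.symm p).1 with hi
    set i' := (finProdFinEquiv.symm p).2 with hi'
    set l := (finProdFinEquiv.symm p').1 with hl
    set l' := (finProdFinEquiv.symm p').2 with hl'
    have key : Nat.card {q : Fin (c₁ * c₂) //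
        B i' (finProdFinEquiv.symm q).2 * A i (finProdFinEquiv.symm q).1 *
          (B l' (finProdFinEquiv.symm q).2 * A l (finProdFinEquiv.symm q).1)⁻¹ = g}
        = Nat.card {x : Fin c₁ × Fin c₂ //
        B i' x.2 * A i x.1 * (B l' x.2 * A l x.1)⁻¹ = g} := by
      refine (Nat.card_congr (finProdFinEquiv.subtypeEquiv fun x => ?_)).symm
      simp
    rw [key]
    have hsplit : i ≠ l ∨ (i = l ∧ i' ≠ l') := by
      by_cases h1 : i = l
      · refine Or.inr ⟨h1, fun h2 => hpp' ?_⟩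
        exact finProdFinEquiv.symm.injective (Prod.ext h1 h2)
      · exact Or.inl h1
    rcases hsplit with h1 | ⟨h1, h2⟩
    · -- count over second coordinate fixed: swap product
      have e : {x : Fin c₁ × Fin c₂ // B i' x.2 * A i x.1 * (B l' x.2 * A l x.1)⁻¹ = g} ≃
          {y : Fin c₂ × Fin c₁ // B i' y.1 * A i y.2 * (B l' y.1 * A l y.2)⁻¹ = g} :=
        (Equiv.prodComm _ _).subtypeEquiv (fun x => by simp)
      have hf : ∀ j' : Fin c₂, Nat.card {j : Fin c₁ //
          B i' j' * A i j * (B l' j' * A l j)⁻¹ = g} = lam := by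
        intro j'
        rw [← hA2 i l h1 ((B i' j')⁻¹ * g * B l' j')]
        refine Nat.card_congr (Equiv.subtypeEquivRight fun j => ?_)
        constructor
        · intro h; rw [← h]; group
        · intro h; rw [mul_inv_rev, mul_assoc, ← mul_assoc (A i j), h]; group
      rw [Nat.card_congr e, card_subtype_prod_snd _ hf, Fintype.card_fin, hc₂]
      ring
    · have hf : ∀ j : Fin c₁, Nat.card {j' : Fin c₂ //
          B i' j' * A i j * (B l' j' * A l j)⁻¹ = g} = mu := by
        intro j
        rw [← hB2 i' l' h2 g]
        refine Nat.card_congr (Equiv.subtypeEquivRight fun j' => ?_)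
        rw [h1]
        constructor <;> intro h <;> rw [← h] <;> group
      rw [card_subtype_prod_snd _ hf, Fintype.card_fin, hc₁]
      ring
end

section
/- Let p be prime and let G be an abelian group of order p^n. A k × n matrix M over G is a (G, k, 0) contracted difference matrix if and only if for all integer row vectors a of length k and b of length n with all entries strictly between −p and p, the equation a M bᵀ = 0_G implies a = 0 or b = 0. -/
/-- The `p`-expansion of a `k × l` matrix over an abelian group: the `p^k × p^l` matrix
whose `(r, c)` entry is `r M cᵀ`. -/
def pExpand (p : ℕ) {G : Type*} [AddCommGroup G] {k l : ℕ} (M : Fin k → Fin l → G) :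
    (Fin k → ZMod p) → (Fin l → ZMod p) → G :=
  fun r c => ∑ i, ∑ j, ((r i).val * (c j).val) • M i j

/-- A `k × l` matrix `M` over an abelian `p`-group `G` (of order `p^n`, with `l = n + s`)
is a `(G, k, s)` contracted difference matrix if its `p`-expansion is a `(G, p^k, p^s)`
difference matrix. -/
def IsCDM (p : ℕ) {G : Type*} [AddCommGroup G] {k l : ℕ} (M : Fin k → Fin l → G)
    (s : ℕ) : Prop :=
  IsAddDiffMatrix (pExpand p M) (p ^ s)

section Aux

variable {G : Type*} [AddCommGroup G] {k n : ℕ}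

/-- The bilinear form `a M bᵀ` with integer vectors. -/
private def auxS (M : Fin k → Fin n → G) (a : Fin k → ℤ) (b : Fin n → ℤ) : G :=
  ∑ i, ∑ j, (a i * b j) • M i j

private lemma auxS_sub_left (M : Fin k → Fin n → G) (a a' : Fin k → ℤ) (b : Fin n → ℤ) :
    auxS M (a - a') b = auxS M a b - auxS M a' b := by
  simp [auxS, sub_mul, sub_smul, Finset.sum_sub_distrib]

private lemma auxS_sub_right (M : Fin k → Fin n → G) (a : Fin k → ℤ) (b b' : Fin n → ℤ) :
    auxS M a (b - b') = auxS M a b - auxS M a b' := by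
  simp [auxS, mul_sub, sub_smul, Finset.sum_sub_distrib]

private lemma pExpand_eq_auxS (p : ℕ) (M : Fin k → Fin n → G)
    (r : Fin k → ZMod p) (c : Fin n → ZMod p) :
    pExpand p M r c = auxS M (fun i => ((r i).val : ℤ)) (fun j => ((c j).val : ℤ)) := by
  unfold pExpand auxS
  refine Finset.sum_congr rfl fun i _ => Finset.sum_congr rfl fun j _ => ?_
  rw [← Int.natCast_mul, natCast_zsmul]

end Aux

/-- Characterization of `(G, k, 0)` contracted difference matrices over an abelian group
of order `p^n`: `M` is a `(G, k, 0)` contracted difference matrix iff `a M bᵀ = 0` forces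
`a = 0` or `b = 0`, for all integer vectors with entries strictly between `-p` and `p`. -/
theorem stmt_12 (p n k : ℕ) (hp : p.Prime) (G : Type*) [AddCommGroup G]
    (hG : Nat.card G = p ^ n) (M : Fin k → Fin n → G) :
    IsCDM p M 0 ↔
      ∀ (a : Fin k → ℤ) (b : Fin n → ℤ),
        (∀ i, -(p : ℤ) < a i ∧ a i < p) → (∀ j, -(p : ℤ) < b j ∧ b j < p) →
        (∑ i, ∑ j, (a i * b j) • M i j) = 0 → a = 0 ∨ b = 0 := by
  have hp2 : 2 ≤ p := hp.two_le
  haveI : NeZero p := ⟨hp.ne_zero⟩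
  set A := pExpand p M with hA
  constructor
  · rintro ⟨-, hcount⟩ a b ha hb hS
    by_contra hcon
    push_neg at hcon
    obtain ⟨ha0, hb0⟩ := hcon
    -- decompose a and b into nonnegative parts
    set r : Fin k → ZMod p := fun i => ((a i).toNat : ZMod p) with hr
    set r' : Fin k → ZMod p := fun i => ((-a i).toNat : ZMod p) with hr'
    set c : Fin n → ZMod p := fun j => ((b j).toNat : ZMod p) with hc
    set c' : Fin n → ZMod p := fun j => ((-b j).toNat : ZMod p) with hc'
    have hvr : ∀ i, (r i).val = (a i).toNat := fun i =>
      ZMod.val_cast_of_lt (by have := (ha i).2; omega)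
    have hvr' : ∀ i, (r' i).val = (-a i).toNat := fun i =>
      ZMod.val_cast_of_lt (by have := (ha i).1; omega)
    have hvc : ∀ j, (c j).val = (b j).toNat := fun j =>
      ZMod.val_cast_of_lt (by have := (hb j).2; omega)
    have hvc' : ∀ j, (c' j).val = (-b j).toNat := fun j =>
      ZMod.val_cast_of_lt (by have := (hb j).1; omega)
    -- the row difference as an integer bilinear form
    have key : ∀ x : Fin n → ZMod p,
        A r x - A r' x = auxS M a (fun j => ((x j).val : ℤ)) := by
      intro x
      rw [hA, pExpand_eq_auxS, pExpand_eq_auxS, ← auxS_sub_left]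
      congr 1
      funext i
      simp only [Pi.sub_apply, hvr, hvr']
      omega
    have hdiff0 : (A r c - A r' c) - (A r c' - A r' c') = 0 := by
      rw [key, key, ← auxS_sub_right]
      have : ((fun j => (((c j).val : ℤ))) - fun j => ((c' j).val : ℤ)) = b := by
        funext j
        simp only [Pi.sub_apply, hvc, hvc']
        omega
      rw [this]
      exact hS
    have hdiff : A r c' - A r' c' = A r c - A r' c := (sub_eq_zero.mp hdiff0).symm
    have hrne : r ≠ r' := by
      obtain ⟨i, hi⟩ := Function.ne_iff.mp ha0
      intro hrr
      apply hi
      have : (r i).val = (r' i).val := by rw [hrr]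
      rw [hvr, hvr'] at this
      simp only [Pi.zero_apply]
      omega
    have hcard := hcount r r' hrne (A r c - A r' c)
    rw [pow_zero] at hcard
    obtain ⟨x0, hx0⟩ := Nat.card_eq_one_iff_exists.mp hcard
    have h1 : (⟨c, rfl⟩ : {x // A r x - A r' x = A r c - A r' c}) = x0 := hx0 _
    have h2 : (⟨c', hdiff⟩ : {x // A r x - A r' x = A r c - A r' c}) = x0 := hx0 _
    have hcc : c = c' := by
      have := h1.trans h2.symm
      exact congrArg Subtype.val this
    apply hb0
    funext j
    have : (c j).val = (c' j).val := by rw [hcc]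
    rw [hvc, hvc'] at this
    simp only [Pi.zero_apply]
    omega
  · intro h
    have hGfin : Finite G := Nat.finite_of_card_ne_zero (by rw [hG]; positivity)
    haveI := Fintype.ofFinite G
    constructor
    · rw [pow_zero, one_mul, Nat.card_pi, hG]
      simp [Nat.card_zmod]
    · intro r r' hne g
      set Δ : (Fin n → ZMod p) → G := fun x => A r x - A r' x with hΔ
      have hinj : Function.Injective Δ := by
        intro x y hxy
        set a : Fin k → ℤ := fun i => ((r i).val : ℤ) - ((r' i).val : ℤ) with ha
        set b : Fin n → ℤ := fun j => ((x j).val : ℤ) - ((y j).val : ℤ) with hb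
        have hab : auxS M a b = 0 := by
          have e1 : a = (fun i => ((r i).val : ℤ)) - fun i => ((r' i).val : ℤ) := rfl
          have e2 : b = (fun j => ((x j).val : ℤ)) - fun j => ((y j).val : ℤ) := rfl
          rw [e1, e2, auxS_sub_left, auxS_sub_right, auxS_sub_right,
            ← pExpand_eq_auxS p M r x, ← pExpand_eq_auxS p M r y,
            ← pExpand_eq_auxS p M r' x, ← pExpand_eq_auxS p M r' y]
          rw [hΔ] at hxy
          simp only at hxy
          rw [sub_eq_zero, sub_eq_sub_iff_sub_eq_sub]
          exact hxy
        have hres := h a b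
          (fun i => by
            have h1 := (r i).val_lt
            have h2 := (r' i).val_lt
            simp only [ha]
            omega)
          (fun j => by
            have h1 := (x j).val_lt
            have h2 := (y j).val_lt
            simp only [hb]
            omega)
          hab
        rcases hres with h0 | h0
        · exfalso
          apply hne
          funext i
          have : a i = 0 := by rw [h0]; rfl
          have hv : (r i).val = (r' i).val := by simp only [ha] at this; omega
          calc r i = ((r i).val : ZMod p) := (ZMod.natCast_rightInverse (r i)).symm
            _ = ((r' i).val : ZMod p) := by rw [hv]
            _ = r' i := ZMod.natCast_rightInverse (r' i)
        · funext j
          have : b j = 0 := by rw [h0]; rfl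
          have hv : (x j).val = (y j).val := by simp only [hb] at this; omega
          calc x j = ((x j).val : ZMod p) := (ZMod.natCast_rightInverse (x j)).symm
            _ = ((y j).val : ZMod p) := by rw [hv]
            _ = y j := ZMod.natCast_rightInverse (y j)
      have hbij : Function.Bijective Δ := by
        rw [Fintype.bijective_iff_injective_and_card]
        refine ⟨hinj, ?_⟩
        rw [← Nat.card_eq_fintype_card, ← Nat.card_eq_fintype_card, Nat.card_pi, hG]
        simp [Nat.card_zmod]
      obtain ⟨x0, hx0⟩ := hbij.surjective g
      rw [pow_zero]
      exact Nat.card_eq_one_iff_exists.mpr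
        ⟨⟨x0, hx0⟩, fun y => Subtype.ext (hinj (y.2.trans hx0.symm))⟩
end

section
/- Let p be prime, n a positive integer, and α a primitive element of GF(p^n). Then the n × n matrix with (i,j)-entry α^{i+j} (0 ≤ i, j ≤ n−1), viewed over the additive group of GF(p^n) ≅ Z_p^n, is a (Z_p^n, n, 0) contracted difference matrix. -/
/-!
Powers `1, α, …, α^(n-1)` of a primitive element form an `𝔽_p`-basis of `GF(p^n)`, and the
matrix `α^(i+j) = α^i · α^j` has rank one, so the `p`-expansion is `(r, c) ↦ x_r · x_c`, where
`x_r = ∑ rᵢ αⁱ` runs bijectively over the field. For `r ≠ ℓ` the equation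
`(x_r - x_ℓ) · x_c = g` has exactly one solution `c`, which is the difference matrix property
with `λ = 1`.
-/

open Module Function
open scoped IntermediateField

theorem isAddDiffMatrix_one_of_eq_mul {K I J : Type*} [DivisionRing K] (A : I → J → K)
    (φ : I → K) (ψ : J ≃ K) (hφ : Injective φ) (hA : ∀ r c, A r c = φ r * ψ c) :
    IsAddDiffMatrix A 1 := by
  refine ⟨by rw [one_mul, Nat.card_congr ψ], fun r ℓ hrℓ g => ?_⟩
  have hd : φ r - φ ℓ ≠ 0 := sub_ne_zero.mpr (hφ.ne hrℓ)
  have hsol : ∀ c, A r c - A ℓ c = g ↔ c = ψ.symm ((φ r - φ ℓ)⁻¹ * g) := fun c => by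
    rw [hA, hA, ← sub_mul, Equiv.eq_symm_apply, eq_inv_mul_iff_mul_eq₀ hd]
  rw [Nat.card_congr (Equiv.subtypeEquivRight hsol), Nat.card_unique]

theorem pExpand_mul {p : ℕ} {R : Type*} [NonUnitalNonAssocRing R] {k l : ℕ}
    (u : Fin k → R) (v : Fin l → R) (r : Fin k → ZMod p) (c : Fin l → ZMod p) :
    pExpand p (fun i j => u i * v j) r c = (∑ i, (r i).val • u i) * ∑ j, (c j).val • v j := by
  simp only [pExpand, Finset.sum_mul_sum, mul_smul, smul_mul_smul_comm]

theorem ZMod.sum_val_smul {p : ℕ} [NeZero p] {ι V : Type*} [Fintype ι] [AddCommGroup V]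
    [Module (ZMod p) V] (v : ι → V) (r : ι → ZMod p) :
    ∑ i, (r i).val • v i = ∑ i, r i • v i := by
  simp only [← Nat.cast_smul_eq_nsmul (ZMod p), ZMod.natCast_zmod_val]

theorem isCDM_zero_of_mul_basis {p : ℕ} [NeZero p] {K : Type*} [DivisionRing K]
    [Module (ZMod p) K] {k l : ℕ} {u : Fin k → K} (hu : LinearIndependent (ZMod p) u)
    (b : Basis (Fin l) (ZMod p) K) : IsCDM p (fun i j => u i * b j) 0 := by
  refine isAddDiffMatrix_one_of_eq_mul _ (Fintype.linearCombination (ZMod p) u)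
    b.equivFun.symm.toEquiv hu.fintypeLinearCombination_injective fun r c => ?_
  simp only [pExpand_mul, ZMod.sum_val_smul, Fintype.linearCombination_apply,
    LinearEquiv.coe_toEquiv, Basis.equivFun_symm_apply]

theorem IntermediateField.adjoin_simple_eq_top_of_forall_pow {K L : Type*} [Field K] [Field L]
    [Algebra K L] {α : L} (hα : ∀ x : L, x ≠ 0 → ∃ m : ℕ, α ^ m = x) : K⟮α⟯ = ⊤ := by
  refine eq_top_iff.mpr fun x _ => ?_
  rcases eq_or_ne x 0 with rfl | hx
  · exact zero_mem _
  · obtain ⟨m, rfl⟩ := hα x hx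
    exact pow_mem (mem_adjoin_simple_self K α) m

theorem linearIndependent_pow_of_adjoin_eq_top {K L : Type*} [Field K] [Field L] [Algebra K L]
    [FiniteDimensional K L] {α : L} (hα : K⟮α⟯ = ⊤) :
    LinearIndependent K fun i : Fin (finrank K L) => α ^ (i : ℕ) := by
  have hdeg : (minpoly K α).natDegree = finrank K L := by
    rw [← IntermediateField.adjoin.finrank (.of_finite K α), hα,
      IntermediateField.finrank_top']
  exact hdeg ▸ linearIndependent_pow α

/-- For a primitive element `α` of `GF(p^n)`, the `n × n` matrix with `(i,j)` entry
`α^(i+j)`, viewed over the additive group of `GF(p^n)`, is a `(Z_p^n, n, 0)` contracted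
difference matrix. -/
theorem stmt_13 (p n : ℕ) [Fact p.Prime] (hn : 0 < n) (α : GaloisField p n)
    (hα : ∀ x : GaloisField p n, x ≠ 0 → ∃ m : ℕ, α ^ m = x) :
    IsCDM p (fun i j : Fin n => α ^ ((i : ℕ) + (j : ℕ))) 0 := by
  have hfinrank : finrank (ZMod p) (GaloisField p n) = n := GaloisField.finrank p hn.ne'
  have hli : LinearIndependent (ZMod p) fun i : Fin n => α ^ (i : ℕ) := by
    have := linearIndependent_pow_of_adjoin_eq_top
      (IntermediateField.adjoin_simple_eq_top_of_forall_pow (K := ZMod p) hα)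
    rwa [hfinrank] at this
  let b := basisOfLinearIndependentOfCardEqFinrank' _ hli (by rw [Fintype.card_fin, hfinrank])
  have hM : (fun i j : Fin n => α ^ ((i : ℕ) + (j : ℕ))) = fun i j : Fin n => α ^ (i : ℕ) * b j := by
    simp only [b, coe_basisOfLinearIndependentOfCardEqFinrank', pow_add]
  exact hM ▸ isCDM_zero_of_mul_basis hli b
end

section
/- Let p be prime and let G, H be abelian groups of orders p^{n+u} and p^n respectively. If φ : G → H is a surjective homomorphism and M = (m_{ij}) is a (G, k, s) contracted difference matrix, then φ(M) = (φ(m_{ij})) is an (H, k, u+s) contracted difference matrix. -/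
theorem stmt_14 (p n u k s : ℕ) (hp : p.Prime) (G H : Type*)
    [AddCommGroup G] [AddCommGroup H]
    (hG : Nat.card G = p ^ (n + u)) (hH : Nat.card H = p ^ n)
    (φ : G →+ H) (hφ : Function.Surjective φ)
    (M : Fin k → Fin (n + u + s) → G) (hM : IsCDM p M s) :
    IsCDM p (fun i j => φ (M i j)) (u + s) := by
  classical
  haveI : NeZero p := ⟨hp.pos.ne'⟩
  have hGfin : Finite G := Nat.finite_of_card_ne_zero (by rw [hG]; exact (pow_pos hp.pos _).ne')
  have hHfin : Finite H := Nat.finite_of_card_ne_zero (by rw [hH]; exact (pow_pos hp.pos _).ne')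
  have hexp : ∀ r c, pExpand p (fun i j => φ (M i j)) r c = φ (pExpand p M r c) := by
    intro r c
    simp [pExpand, map_sum, map_nsmul]
  -- kernel card
  have hker : Nat.card (AddMonoidHom.ker φ) = p ^ u := by
    have h1 : Nat.card G = Nat.card (G ⧸ AddMonoidHom.ker φ) * Nat.card (AddMonoidHom.ker φ) :=
      AddSubgroup.card_eq_card_quotient_mul_card_addSubgroup _
    have h2 : Nat.card (G ⧸ AddMonoidHom.ker φ) = Nat.card H :=
      Nat.card_congr (QuotientAddGroup.quotientKerEquivOfSurjective φ hφ).toEquiv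
    rw [h2, hH, hG, pow_add] at h1
    exact Nat.eq_of_mul_eq_mul_left (pow_pos hp.pos n) h1.symm
  -- fibers of φ
  have hfib : ∀ h : H, Nat.card {g : G // φ g = h} = p ^ u := by
    intro h
    obtain ⟨g0, hg0⟩ := hφ h
    rw [← hker]
    apply Nat.card_congr
    refine ⟨fun g => ⟨g.1 - g0, ?_⟩, fun x => ⟨x.1 + g0, ?_⟩,
      fun g => Subtype.ext (sub_add_cancel _ _), fun x => Subtype.ext (add_sub_cancel_right _ _)⟩
    · simp [AddMonoidHom.mem_ker, g.2, hg0]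
    · simp [map_add, AddMonoidHom.mem_ker.mp x.2, hg0]
  obtain ⟨hc, hd⟩ := hM
  constructor
  · rw [hH, ← pow_add]
    have : Nat.card (Fin (n + u + s) → ZMod p) = p ^ (n + u + s) := by
      simp [Nat.card_eq_fintype_card, ZMod.card]
    rw [this]; ring_nf
  · intro r ρ hrρ h
    have key : ∀ c, pExpand p (fun i j => φ (M i j)) r c -
        pExpand p (fun i j => φ (M i j)) ρ c = φ (pExpand p M r c - pExpand p M ρ c) := by
      intro c; rw [hexp, hexp, map_sub]
    have hcong : Nat.card {c // pExpand p (fun i j => φ (M i j)) r c -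
        pExpand p (fun i j => φ (M i j)) ρ c = h}
        = Nat.card (Σ g : {g : G // φ g = h},
            {c // pExpand p M r c - pExpand p M ρ c = g.1}) := by
      exact (Nat.card_congr (Equiv.sigmaSubtypeFiberEquivSubtype
        (fun c => pExpand p M r c - pExpand p M ρ c) (fun c => (by rw [key c] :
          (pExpand p (fun i j => φ (M i j)) r c - pExpand p (fun i j => φ (M i j)) ρ c = h)
          ↔ φ (pExpand p M r c - pExpand p M ρ c) = h)))).symm
    rw [hcong]
    haveI : Fintype G := Fintype.ofFinite G
    rw [Nat.card_eq_fintype_card, Fintype.card_sigma]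
    have : ∀ g : {g : G // φ g = h},
        Fintype.card {c // pExpand p M r c - pExpand p M ρ c = g.1} = p ^ s := by
      intro g
      rw [← Nat.card_eq_fintype_card]
      exact hd r ρ hrρ g.1
    simp only [this, Finset.sum_const, Finset.card_univ, smul_eq_mul]
    rw [← Nat.card_eq_fintype_card, hfib h, ← pow_add]
end

section
/- Let p be prime and let k, n ≥ 1 and s ≥ 0 be integers. Then there exists a (Z_p^n, k, s) contracted difference matrix if and only if k ≤ n+s. -/
/-!
Over `ZMod p` the `p`-expansion is bilinear, so the differences of two rows of `f_p(M)` are the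
rows `c ↦ d M cᵀ` with `d ≠ 0`, and `M` is a contracted difference matrix exactly when each of
these linear maps `𝔽_p^(n+s) → G` is onto. Composing with a functional `φ` that is nonzero on `G`,
`d ↦ (φ (d M)ⱼ)ⱼ` is then an injective linear map `𝔽_p^k → 𝔽_p^(n+s)`, whence `k ≤ n + s`.
Conversely, identify `𝔽_p^(n+s)` with `𝔽_(p^(n+s))` through a basis `b`, let `π` read off `n`
coordinates and put `M i j = π (b i * b j)`: then `d M cᵀ = π (a_d * c)` with `a_d ≠ 0`, which is
onto because multiplication by `a_d` is.
-/

open Function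

theorem AddMonoidHom.card_fiber_mul_card_of_surjective {V W : Type*} [AddGroup V] [AddGroup W]
    [Finite V] (f : V →+ W) (hf : Surjective f) (w : W) :
    Nat.card {v // f v = w} * Nat.card W = Nat.card V := by
  obtain ⟨v₀, rfl⟩ := hf w
  have fiber_equiv_ker : {v // f v = f v₀} ≃ f.ker :=
    { toFun := fun v => ⟨v.1 - v₀, by simp [v.2]⟩
      invFun := fun v => ⟨v.1 + v₀, by simp [f.mem_ker.mp v.2]⟩
      left_inv := fun v => by simp
      right_inv := fun v => by simp }
  rw [Nat.card_congr fiber_equiv_ker, ← f.ker.card_mul_index, AddSubgroup.index_ker,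
    AddMonoidHom.range_eq_top.mpr hf, AddSubgroup.card_top]

section pExpand

variable {p : ℕ} [NeZero p] {G : Type*} [AddCommGroup G] [Module (ZMod p) G] {k l : ℕ}
  (M : Fin k → Fin l → G)

theorem pExpand_eq_sum_smul (r : Fin k → ZMod p) (c : Fin l → ZMod p) :
    pExpand p M r c = ∑ i, ∑ j, (r i * c j) • M i j := by
  simp only [pExpand, ← Nat.cast_smul_eq_nsmul (ZMod p), Nat.cast_mul, ZMod.natCast_zmod_val]

theorem pExpand_eq_linearCombination (r : Fin k → ZMod p) :
    pExpand p M r = Fintype.linearCombination (ZMod p) (fun j => ∑ i, r i • M i j) := by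
  ext c
  simp only [pExpand_eq_sum_smul, Fintype.linearCombination_apply, Finset.smul_sum, smul_smul]
  rw [Finset.sum_comm]
  simp only [mul_comm]

theorem pExpand_sub_pExpand (r ℓ : Fin k → ZMod p) (c : Fin l → ZMod p) :
    pExpand p M r c - pExpand p M ℓ c = pExpand p M (r - ℓ) c := by
  simp only [pExpand_eq_sum_smul, Pi.sub_apply, sub_mul, sub_smul, Finset.sum_sub_distrib]

variable {M}

theorem IsCDM.surjective {s : ℕ} (hM : IsCDM p M s) {d : Fin k → ZMod p} (hd : d ≠ 0) :
    Surjective (pExpand p M d) := by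
  intro g
  have hfiber := hM.2 d 0 hd g
  simp only [pExpand_sub_pExpand, sub_zero] at hfiber
  obtain ⟨⟨c, hc⟩⟩ := Nat.card_pos_iff.mp (hfiber ▸ pow_pos (Nat.pos_of_neZero p) s) |>.1
  exact ⟨c, hc⟩

theorem isCDM_of_surjective [Finite G] {s : ℕ} (hcard : p ^ l = p ^ s * Nat.card G)
    (hM : ∀ d : Fin k → ZMod p, d ≠ 0 → Surjective (pExpand p M d)) : IsCDM p M s := by
  refine ⟨by simpa using hcard, fun r ℓ hrℓ g => ?_⟩
  have hsurj := hM (r - ℓ) (sub_ne_zero.mpr hrℓ)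
  rw [pExpand_eq_linearCombination] at hsurj
  have hfiber := (Fintype.linearCombination (ZMod p) _).toAddMonoidHom
    |>.card_fiber_mul_card_of_surjective hsurj g
  simp only [Nat.card_eq_fintype_card, Fintype.card_fun, ZMod.card, Fintype.card_fin] at hfiber
  simp only [pExpand_sub_pExpand]
  rw [pExpand_eq_linearCombination]
  exact Nat.eq_of_mul_eq_mul_right Nat.card_pos (hfiber.trans hcard)

theorem IsCDM.le [Fact p.Prime] [Nontrivial G] {s : ℕ} (hM : IsCDM p M s) : k ≤ l := by
  obtain ⟨v, hv⟩ := exists_ne (0 : G)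
  obtain ⟨φ, hφv⟩ := Module.Projective.exists_dual_eq_one (ZMod p) hv
  let T : (Fin k → ZMod p) →ₗ[ZMod p] (Fin l → ZMod p) :=
    LinearMap.pi fun j => φ ∘ₗ Fintype.linearCombination (ZMod p) (fun i => M i j)
  have hφT : ∀ d c, φ (pExpand p M d c) = ∑ j, c j * T d j := by
    intro d c
    simp [T, pExpand_eq_linearCombination, Fintype.linearCombination_apply, map_sum]
  have hT : Injective T := by
    refine (injective_iff_map_eq_zero T).mpr fun d hd => by_contra fun hd0 => ?_
    obtain ⟨c, hc⟩ := hM.surjective hd0 v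
    simpa [hc, hφv, hd] using hφT d c
  simpa using T.finrank_le_finrank_of_injective hT

theorem surjective_pExpand_proj_mul_basis {K : Type*} [Field K] [Algebra (ZMod p) K]
    (b : Module.Basis (Fin l) (ZMod p) K) {e : Fin k → Fin l} (he : Injective e)
    {π : K →ₗ[ZMod p] G} (hπ : Surjective π) {d : Fin k → ZMod p} (hd : d ≠ 0) :
    Surjective (pExpand p (fun i j => π (b (e i) * b j)) d) := by
  set a := ∑ i, d i • b (e i)
  have ha : a ≠ 0 := fun h =>
    hd (funext (Fintype.linearIndependent_iff.mp (b.linearIndependent.comp e he) d h))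
  have hexpand : pExpand p (fun i j => π (b (e i) * b j)) d = π ∘ (a * ·) ∘ b.equivFun.symm := by
    ext c
    simp [a, pExpand_eq_sum_smul, b.equivFun_symm_apply, Finset.sum_mul, Finset.mul_sum, map_sum,
      Finset.smul_sum, smul_smul]
  rw [hexpand]
  exact hπ.comp ((mul_left_surjective₀ ha).comp b.equivFun.symm.surjective)

end pExpand

theorem stmt_15_general (p : ℕ) (hp : p.Prime) (k n s : ℕ) (hn : 1 ≤ n) :
    (∃ M : Fin k → Fin (n + s) → (Fin n → ZMod p), IsCDM p M s) ↔ k ≤ n + s := by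
  have := Fact.mk hp
  have : Nonempty (Fin n) := ⟨⟨0, hn⟩⟩
  refine ⟨fun ⟨M, hM⟩ => hM.le, fun hks => ?_⟩
  let b : Module.Basis (Fin (n + s)) (ZMod p) (GaloisField p (n + s)) :=
    Module.finBasisOfFinrankEq _ _ (GaloisField.finrank p (by omega))
  let π := LinearMap.funLeft (ZMod p) (ZMod p) (Fin.castAdd s) ∘ₗ b.equivFun.toLinearMap
  have hπ : Surjective π := (LinearMap.funLeft_surjective_of_injective (ZMod p) (ZMod p) _
    (Fin.castAdd_injective n s)).comp b.equivFun.surjective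
  exact ⟨_, isCDM_of_surjective (by simp [pow_add, mul_comm])
    fun d hd => surjective_pExpand_proj_mul_basis b (Fin.castLE_injective hks) hπ hd⟩

/-- There exists a `(Z_p^n, k, s)` contracted difference matrix iff `k ≤ n + s`. -/
theorem stmt_15 (p : ℕ) (hp : p.Prime) (k n s : ℕ) (hk : 1 ≤ k) (hn : 1 ≤ n) :
    (∃ M : Fin k → Fin (n + s) → (Fin n → ZMod p), IsCDM p M s) ↔ k ≤ n + s :=
  stmt_15_general p hp k n s hn
end

section
/- Let G be an abelian p-group with subgroup H. If L is an (H, k, s) contracted difference matrix and M = (m_{ij}) is a matrix of coset representatives such that (m_{ij}+H) is a (G/H, k, t) contracted difference matrix, then the block matrix [L | M] is a (G, k, s+t) contracted difference matrix. -/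
lemma pExpand_append (p : ℕ) (G : Type*) [AddCommGroup G] (H : AddSubgroup G) {k l₁ l₂ : ℕ}
    (L : Fin k → Fin l₁ → H) (M : Fin k → Fin l₂ → G)
    (r : Fin k → ZMod p) (c : Fin (l₁ + l₂) → ZMod p) :
    pExpand p (fun i (j : Fin (l₁ + l₂)) =>
        Fin.addCases (motive := fun _ => G) (fun j₁ => (L i j₁ : G)) (fun j₂ => M i j₂) j) r c
    = ((pExpand p L r (fun j₁ => c (Fin.castAdd l₂ j₁)) : H) : G)
      + pExpand p M r (fun j₂ => c (Fin.natAdd l₁ j₂)) := by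
  simp only [pExpand, Fin.sum_univ_add, Fin.addCases_left, Fin.addCases_right,
    Finset.sum_add_distrib, AddSubmonoidClass.coe_finset_sum, AddSubgroup.coe_nsmul]

lemma pExpand_mk (p : ℕ) {G : Type*} [AddCommGroup G] (H : AddSubgroup G) {k l₂ : ℕ}
    (M : Fin k → Fin l₂ → G) (r : Fin k → ZMod p) (c : Fin l₂ → ZMod p) :
    (QuotientAddGroup.mk (pExpand p M r c) : G ⧸ H)
      = pExpand p (fun i j => (QuotientAddGroup.mk (M i j) : G ⧸ H)) r c := by
  show QuotientAddGroup.mk' H _ = _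
  simp only [pExpand, map_sum, map_nsmul, QuotientAddGroup.mk'_apply]

/-- Composition construction for contracted difference matrices: if `L` is an `(H, k, s)`
contracted difference matrix over a subgroup `H` of the abelian `p`-group `G`, and `M`
consists of coset representatives whose image is a `(G/H, k, t)` contracted difference
matrix, then `[L | M]` is a `(G, k, s + t)` contracted difference matrix. -/
theorem stmt_16 (p : ℕ) (hp : p.Prime) (G : Type*) [AddCommGroup G] [Finite G]
    (hGp : ∃ m : ℕ, Nat.card G = p ^ m) (H : AddSubgroup G) {k l₁ l₂ s t : ℕ}
    (L : Fin k → Fin l₁ → H) (hL : IsCDM p L s)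
    (M : Fin k → Fin l₂ → G)
    (hM : IsCDM p (fun i j => (QuotientAddGroup.mk (M i j) : G ⧸ H)) t) :
    IsCDM p
      (fun i (j : Fin (l₁ + l₂)) =>
        Fin.addCases (motive := fun _ => G) (fun j₁ => (L i j₁ : G)) (fun j₂ => M i j₂) j)
      (s + t) := by
  haveI : Fact p.Prime := ⟨hp⟩
  classical
  obtain ⟨hcard_L, hdiff_L⟩ := hL
  obtain ⟨hcard_M, hdiff_M⟩ := hM
  constructor
  · -- cardinality condition
    have h1 : Nat.card (Fin l₁ → ZMod p) = p ^ l₁ := by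
      simp [Nat.card_fun, Nat.card_zmod]
    have h2 : Nat.card (Fin l₂ → ZMod p) = p ^ l₂ := by
      simp [Nat.card_fun, Nat.card_zmod]
    have h3 : Nat.card (Fin (l₁ + l₂) → ZMod p) = p ^ (l₁ + l₂) := by
      simp [Nat.card_fun, Nat.card_zmod]
    rw [h3, pow_add, h1.symm.trans hcard_L, h2.symm.trans hcard_M,
      AddSubgroup.card_eq_card_quotient_mul_card_addSubgroup H]
    ring
  · intro r r' hne g
    -- abbreviations
    set DL : (Fin l₁ → ZMod p) → H := fun c₁ => pExpand p L r c₁ - pExpand p L r' c₁ with hDL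
    set DM : (Fin l₂ → ZMod p) → G := fun c₂ => pExpand p M r c₂ - pExpand p M r' c₂ with hDM
    have hmkDM : ∀ c₂, (QuotientAddGroup.mk (DM c₂) : G ⧸ H)
        = pExpand p (fun i j => (QuotientAddGroup.mk (M i j) : G ⧸ H)) r c₂
          - pExpand p (fun i j => (QuotientAddGroup.mk (M i j) : G ⧸ H)) r' c₂ := by
      intro c₂
      rw [hDM]
      show QuotientAddGroup.mk' H _ = _
      rw [map_sub]
      simp only [QuotientAddGroup.mk'_apply, pExpand_mk]
    -- the difference of the appended matrix
    have hD : ∀ c : Fin (l₁ + l₂) → ZMod p,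
        pExpand p (fun i (j : Fin (l₁ + l₂)) =>
          Fin.addCases (motive := fun _ => G) (fun j₁ => (L i j₁ : G)) (fun j₂ => M i j₂) j) r c
        - pExpand p (fun i (j : Fin (l₁ + l₂)) =>
          Fin.addCases (motive := fun _ => G) (fun j₁ => (L i j₁ : G)) (fun j₂ => M i j₂) j) r' c
        = ((DL (fun j₁ => c (Fin.castAdd l₂ j₁)) : H) : G)
          + DM (fun j₂ => c (Fin.natAdd l₁ j₂)) := by
      intro c
      rw [pExpand_append p G H L M r c, pExpand_append p G H L M r' c, hDL, hDM]
      push_cast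
      abel
    -- equivalence to a sigma type
    let P : (Fin l₂ → ZMod p) → (Fin l₁ → ZMod p) → Prop :=
      fun c₂ c₁ => ((DL c₁ : H) : G) + DM c₂ = g
    let e₁ : (Fin (l₁ + l₂) → ZMod p) ≃ (Fin l₂ → ZMod p) × (Fin l₁ → ZMod p) :=
      (Equiv.arrowCongr finSumFinEquiv.symm (Equiv.refl _)).trans
        ((Equiv.sumArrowEquivProdArrow _ _ _).trans (Equiv.prodComm _ _))
    have hcount : Nat.card {c : Fin (l₁ + l₂) → ZMod p //
        pExpand p (fun i (j : Fin (l₁ + l₂)) =>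
          Fin.addCases (motive := fun _ => G) (fun j₁ => (L i j₁ : G)) (fun j₂ => M i j₂) j) r c
        - pExpand p (fun i (j : Fin (l₁ + l₂)) =>
          Fin.addCases (motive := fun _ => G) (fun j₁ => (L i j₁ : G)) (fun j₂ => M i j₂) j) r' c
        = g} = ∑ c₂ : Fin l₂ → ZMod p, Nat.card {c₁ : Fin l₁ → ZMod p // P c₂ c₁} := by
      have e₂ : {c : Fin (l₁ + l₂) → ZMod p //
          pExpand p (fun i (j : Fin (l₁ + l₂)) =>
            Fin.addCases (motive := fun _ => G) (fun j₁ => (L i j₁ : G)) (fun j₂ => M i j₂) j) r c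
          - pExpand p (fun i (j : Fin (l₁ + l₂)) =>
            Fin.addCases (motive := fun _ => G) (fun j₁ => (L i j₁ : G)) (fun j₂ => M i j₂) j) r' c
          = g} ≃ {x : (Fin l₂ → ZMod p) × (Fin l₁ → ZMod p) // P x.1 x.2} := by
        refine (e₁.subtypeEquiv fun c => ?_)
        rw [hD c]
        have h1 : (e₁ c).1 = fun j₂ => c (Fin.natAdd l₁ j₂) := by
          funext j₂
          simp [e₁, finSumFinEquiv]
        have h2 : (e₁ c).2 = fun j₁ => c (Fin.castAdd l₂ j₁) := by
          funext j₁
          simp [e₁, finSumFinEquiv]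
        rw [show P (e₁ c).1 (e₁ c).2 ↔ _ from iff_of_eq (by rw [h1, h2])]
      rw [Nat.card_congr (e₂.trans (Equiv.subtypeProdEquivSigmaSubtype P))]
      simp [Nat.card_eq_fintype_card, Fintype.card_sigma]
    rw [hcount]
    -- evaluate each summand
    have hsummand : ∀ c₂ : Fin l₂ → ZMod p, Nat.card {c₁ : Fin l₁ → ZMod p // P c₂ c₁}
        = if (QuotientAddGroup.mk (DM c₂) : G ⧸ H) = QuotientAddGroup.mk g then p ^ s else 0 := by
      intro c₂
      by_cases h : (QuotientAddGroup.mk (DM c₂) : G ⧸ H) = QuotientAddGroup.mk g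
      · rw [if_pos h]
        have hmem : g - DM c₂ ∈ H := by
          have := (QuotientAddGroup.eq_iff_sub_mem).mp h
          have := H.neg_mem this
          simpa [neg_sub] using this
        have : {c₁ : Fin l₁ → ZMod p // P c₂ c₁} ≃ {c₁ : Fin l₁ → ZMod p // DL c₁ = ⟨g - DM c₂, hmem⟩} := by
          refine Equiv.subtypeEquivRight fun c₁ => ?_
          rw [Subtype.ext_iff]
          show ((DL c₁ : H) : G) + DM c₂ = g ↔ ((DL c₁ : H) : G) = g - DM c₂
          exact eq_sub_iff_add_eq.symm
        rw [Nat.card_congr this]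
        exact hdiff_L r r' hne ⟨g - DM c₂, hmem⟩
      · rw [if_neg h]
        have : IsEmpty {c₁ : Fin l₁ → ZMod p // P c₂ c₁} := by
          constructor
          rintro ⟨c₁, hc₁⟩
          apply h
          rw [QuotientAddGroup.eq_iff_sub_mem]
          have : DM c₂ - g = -((DL c₁ : H) : G) := by
            have := hc₁
            show DM c₂ - g = _
            rw [← this]
            abel
          rw [this]
          exact H.neg_mem (DL c₁).2
        exact Nat.card_of_isEmpty
    simp only [hsummand]
    rw [Finset.sum_ite, Finset.sum_const, Finset.sum_const_zero, add_zero, smul_eq_mul]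
    have hfc : (Finset.filter (fun c₂ => (QuotientAddGroup.mk (DM c₂) : G ⧸ H) = QuotientAddGroup.mk g) Finset.univ).card
        = Nat.card {c₂ : Fin l₂ → ZMod p // (QuotientAddGroup.mk (DM c₂) : G ⧸ H) = QuotientAddGroup.mk g} := by
      rw [Nat.card_eq_fintype_card, Fintype.card_subtype]
    rw [hfc]
    have he : {c₂ : Fin l₂ → ZMod p // (QuotientAddGroup.mk (DM c₂) : G ⧸ H) = QuotientAddGroup.mk g}
        ≃ {c₂ : Fin l₂ → ZMod p //
          pExpand p (fun i j => (QuotientAddGroup.mk (M i j) : G ⧸ H)) r c₂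
          - pExpand p (fun i j => (QuotientAddGroup.mk (M i j) : G ⧸ H)) r' c₂
          = QuotientAddGroup.mk g} :=
      Equiv.subtypeEquivRight fun c₂ => by rw [hmkDM c₂]
    rw [Nat.card_congr he, hdiff_M r r' hne (QuotientAddGroup.mk g), pow_add]
    ring
end

section
/- For every positive integer e, the 2 × (e+1) matrix over Z_{2^e} × Z_2 whose first row is (0,1), (1,0), (2,0), (4,0), ..., (2^{e−1},0) and whose second row is (2^{e−1},1), (0,1), (1,0), (2,0), ..., (2^{e−2},0) is a (Z_{2^e} × Z_2, 2, 0) contracted difference matrix; in particular, a (Z_{2^e} × Z_2, 2, 0) contracted difference matrix exists. -/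
open Finset

theorem isAddDiffMatrix_one_of_injective {G I J : Type*} [AddGroup G] [Finite G]
    (A : I → J → G) (hcard : Nat.card J = Nat.card G)
    (hinj : ∀ i ℓ, i ≠ ℓ → Function.Injective fun j => A i j - A ℓ j) :
    IsAddDiffMatrix A 1 := by
  refine ⟨by rw [hcard, one_mul], fun i ℓ hiℓ g => ?_⟩
  obtain ⟨j, hj⟩ := ((hinj i ℓ hiℓ).bijective_of_nat_card_le hcard.ge).surjective g
  exact Nat.card_eq_one_iff_exists.mpr
    ⟨⟨j, hj⟩, fun j' => Subtype.ext (hinj i ℓ hiℓ (j'.2.trans hj.symm))⟩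

theorem pExpand_sub_sub (p : ℕ) {G : Type*} [AddCommGroup G] {k l : ℕ}
    (M : Fin k → Fin l → G) (r ℓ : Fin k → ZMod p) (c c' : Fin l → ZMod p) :
    pExpand p M r c - pExpand p M ℓ c - (pExpand p M r c' - pExpand p M ℓ c') =
      ∑ i, ∑ j, ((((r i).val : ℤ) - (ℓ i).val) * (((c j).val : ℤ) - (c' j).val)) • M i j := by
  simp only [pExpand, ← sum_sub_distrib, ← natCast_zsmul, ← sub_smul]
  push_cast
  congr! 3
  ring

theorem isCDM_two_zero_of_forall_sum_smul_eq_zero {G : Type*} [AddCommGroup G] [Finite G]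
    {k l : ℕ} (M : Fin k → Fin l → G) (hcard : Nat.card G = 2 ^ l)
    (h : ∀ (a : Fin k → ℤ) (b : Fin l → ℤ), (∀ i, |a i| ≤ 1) → (∀ j, |b j| ≤ 1) →
      ∑ i, ∑ j, (a i * b j) • M i j = 0 → a = 0 ∨ b = 0) :
    IsCDM 2 M 0 := by
  refine isAddDiffMatrix_one_of_injective _ (by simp [hcard]) fun r ℓ hrℓ c c' hcc => ?_
  have hsum := pExpand_sub_sub 2 M r ℓ c c'
  rw [sub_eq_zero.mpr hcc, eq_comm] at hsum
  have abs_val_sub_le (x y : ZMod 2) : |((x.val : ℤ) - y.val)| ≤ 1 := by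
    have := x.val_lt
    have := y.val_lt
    rw [abs_le]
    omega
  have eq_of_val_sub_eq_zero {x y : ZMod 2} (hxy : ((x.val : ℤ) - y.val) = 0) : x = y :=
    ZMod.val_injective 2 (by omega)
  rcases h _ _ (fun i => abs_val_sub_le _ _) (fun j => abs_val_sub_le _ _)
    (by simpa using hsum) with ha | hb
  · exact absurd (funext fun i => eq_of_val_sub_eq_zero (congrFun ha i)) hrℓ
  · exact funext fun j => eq_of_val_sub_eq_zero (congrFun hb j)

theorem isCDM_two_zero_of_intCast {k l m m' : ℕ} [NeZero m] [NeZero m'] (hcard : m * m' = 2 ^ l)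
    (X : Fin k → Fin l → ℤ × ℤ)
    (h : ∀ (a : Fin k → ℤ) (b : Fin l → ℤ), (∀ i, |a i| ≤ 1) → (∀ j, |b j| ≤ 1) →
      (m : ℤ) ∣ (∑ i, ∑ j, (a i * b j) • X i j).1 →
      (m' : ℤ) ∣ (∑ i, ∑ j, (a i * b j) • X i j).2 → a = 0 ∨ b = 0) :
    IsCDM 2 (fun i j => (((X i j).1 : ZMod m), ((X i j).2 : ZMod m'))) 0 := by
  refine isCDM_two_zero_of_forall_sum_smul_eq_zero _ (by simp [hcard])
    fun a b ha hb hsum => h a b ha hb ?_ ?_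
  · rw [← ZMod.intCast_zmod_eq_zero_iff_dvd]
    simpa [Prod.fst_sum] using congrArg Prod.fst hsum
  · rw [← ZMod.intCast_zmod_eq_zero_iff_dvd]
    simpa [Prod.snd_sum] using congrArg Prod.snd hsum

theorem Int.eq_zero_or_odd_of_abs_le_one {x : ℤ} (hx : |x| ≤ 1) : x = 0 ∨ Odd x := by
  rw [abs_le] at hx
  rw [Int.odd_iff]
  omega

theorem Int.eq_zero_or_odd_mul {x y : ℤ} (hx : x = 0 ∨ Odd x) (hy : Odd y) :
    x * y = 0 ∨ Odd (x * y) :=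
  hx.imp (fun h => by rw [h, zero_mul]) (fun h => h.mul hy)

theorem Int.ne_zero_of_odd {x : ℤ} (hx : Odd x) : x ≠ 0 := by
  rintro rfl
  simp at hx

theorem Int.eq_zero_of_abs_le_one_of_two_dvd_mul {x y : ℤ} (hx : |x| ≤ 1) (hy : Odd y)
    (h : 2 ∣ y * x) : x = 0 := by
  rw [← even_iff_two_dvd, Int.even_mul, ← Int.not_odd_iff_even, ← Int.not_odd_iff_even] at h
  have hx' := h.resolve_left (not_not.mpr hy)
  rw [Int.odd_iff] at hx'
  rw [abs_le] at hx
  omega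

theorem Int.eq_zero_of_two_pow_dvd_sum_mul_two_pow {m : ℕ} (c : Fin m → ℤ)
    (hc : ∀ k, c k = 0 ∨ Odd (c k)) (h : 2 ^ m ∣ ∑ k, c k * 2 ^ (k : ℕ)) : c = 0 := by
  induction m with
  | zero => exact funext fun k => k.elim0
  | succ m ih =>
    simp only [Fin.sum_univ_succ, Fin.val_zero, pow_zero, mul_one, Fin.val_succ, pow_succ,
      ← mul_assoc, ← sum_mul] at h
    have hc0 : c 0 = 0 := by
      have h2 : (2 : ℤ) ∣ c 0 := by
        rw [← dvd_add_left (dvd_mul_left 2 _)]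
        exact (dvd_mul_left 2 _).trans h
      exact (hc 0).resolve_right (Int.not_odd_iff_even.mpr (even_iff_two_dvd.mpr h2))
    rw [hc0, zero_add, mul_dvd_mul_iff_right two_ne_zero] at h
    have htail := ih (fun k => c k.succ) (fun k => hc k.succ) h
    exact funext (Fin.cases hc0 fun k => congrFun htail k)

/-- Integer representatives of the entries of the matrix in `stmt_17`. -/
def cdmLift (e : ℕ) (i : Fin 2) (j : Fin (e + 1)) : ℤ × ℤ :=
  if (i : ℕ) = 0 then
    (if (j : ℕ) = 0 then (0, 1) else (2 ^ ((j : ℕ) - 1), 0))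
  else
    (if (j : ℕ) = 0 then (2 ^ (e - 1), 1)
     else if (j : ℕ) = 1 then (0, 1)
     else (2 ^ ((j : ℕ) - 2), 0))

theorem sum_smul_cdmLift (n : ℕ) (a : Fin 2 → ℤ) (b : Fin (n + 2) → ℤ) :
    ∑ i, ∑ j, (a i * b j) • cdmLift (n + 1) i j =
      (a 1 * b 0 * 2 ^ n + a 0 * b 1 +
          ∑ k : Fin n, b k.succ.succ * (2 * a 0 + a 1) * 2 ^ (k : ℕ),
        (a 0 + a 1) * b 0 + a 1 * b 1) := by
  have hsum : ∑ k : Fin n, b k.succ.succ * (2 * a 0 + a 1) * 2 ^ (k : ℕ) =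
      ∑ k : Fin n, a 0 * b k.succ.succ * 2 ^ ((k : ℕ) + 1) +
        ∑ k : Fin n, a 1 * b k.succ.succ * 2 ^ (k : ℕ) := by
    rw [← sum_add_distrib]
    exact sum_congr rfl fun k _ => by ring
  simp only [Fin.sum_univ_two, Fin.sum_univ_succ (n := n + 1), Fin.sum_univ_succ (n := n),
    cdmLift]
  ext
  · simp [Prod.fst_sum, hsum]
    ring
  · simp [Prod.snd_sum]
    ring

section

variable {n : ℕ} {a : Fin 2 → ℤ} {b : Fin (n + 2) → ℤ}

theorem eq_zero_of_dvd_of_second_coeff_eq_zero (hb : ∀ j, |b j| ≤ 1) (ha0 : Odd (a 0))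
    (ha1 : a 1 = 0)
    (h1 : 2 ^ (n + 1) ∣
      a 1 * b 0 * 2 ^ n + a 0 * b 1 + ∑ k : Fin n, b k.succ.succ * (2 * a 0 + a 1) * 2 ^ (k : ℕ))
    (h2 : 2 ∣ (a 0 + a 1) * b 0 + a 1 * b 1) : b = 0 := by
  have hb0 : b 0 = 0 := by
    rw [ha1, add_zero, zero_mul, add_zero] at h2
    exact Int.eq_zero_of_abs_le_one_of_two_dvd_mul (hb 0) ha0 h2
  have hdigits : (fun k : Fin (n + 1) => b k.succ * a 0) = 0 := by
    refine Int.eq_zero_of_two_pow_dvd_sum_mul_two_pow _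
      (fun k => Int.eq_zero_or_odd_mul (Int.eq_zero_or_odd_of_abs_le_one (hb _)) ha0) ?_
    convert h1 using 1
    simp only [Fin.sum_univ_succ, ha1, Fin.val_zero, Fin.val_succ, pow_succ]
    rw [Fin.succ_zero_eq_one]
    congr 1
    · ring
    · exact sum_congr rfl fun k _ => by ring
  exact funext (Fin.cases hb0 fun k =>
    (mul_eq_zero.mp (congrFun hdigits k)).resolve_right (Int.ne_zero_of_odd ha0))

theorem eq_zero_of_dvd_of_odd_second_coeff (hb : ∀ j, |b j| ≤ 1) (ha0 : a 0 = 0 ∨ Odd (a 0))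
    (ha1 : Odd (a 1))
    (h1 : 2 ^ (n + 1) ∣
      a 1 * b 0 * 2 ^ n + a 0 * b 1 + ∑ k : Fin n, b k.succ.succ * (2 * a 0 + a 1) * 2 ^ (k : ℕ))
    (h2 : 2 ∣ (a 0 + a 1) * b 0 + a 1 * b 1) : b = 0 := by
  -- `a 0 * b 1` is the term whose valuation would collide with that of `k = 0` in the sum.
  have hb1' : a 0 * b 1 = 0 := by
    rcases ha0 with ha0 | ha0
    · rw [ha0, zero_mul]
    · have hsum : 2 ∣ (a 0 + a 1) * b 0 :=
        (even_iff_two_dvd.mp (ha0.add_odd ha1)).mul_right _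
      rw [Int.eq_zero_of_abs_le_one_of_two_dvd_mul (hb 1) ha1 ((dvd_add_right hsum).mp h2),
        mul_zero]
  have hodd : Odd (2 * a 0 + a 1) := (even_two_mul _).add_odd ha1
  have hdigits : (Fin.snoc (fun k : Fin n => b k.succ.succ * (2 * a 0 + a 1)) (b 0 * a 1) :
      Fin (n + 1) → ℤ) = 0 := by
    refine Int.eq_zero_of_two_pow_dvd_sum_mul_two_pow _ (fun k => ?_) ?_
    · induction k using Fin.lastCases with
      | last => simpa using Int.eq_zero_or_odd_mul (Int.eq_zero_or_odd_of_abs_le_one (hb 0)) ha1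
      | cast k => simpa using Int.eq_zero_or_odd_mul (Int.eq_zero_or_odd_of_abs_le_one (hb _)) hodd
    · convert h1 using 1
      simp only [Fin.sum_univ_castSucc, Fin.snoc_castSucc, Fin.snoc_last, Fin.val_castSucc,
        Fin.val_last, hb1']
      ring
  have hb0 : b 0 = 0 := by
    simpa [Int.ne_zero_of_odd ha1] using congrFun hdigits (Fin.last n)
  have hbk (k : Fin n) : b k.succ.succ = 0 := by
    simpa [Int.ne_zero_of_odd hodd] using congrFun hdigits k.castSucc
  have hb1 : b 1 = 0 := by
    rw [hb0, mul_zero, zero_add] at h2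
    exact Int.eq_zero_of_abs_le_one_of_two_dvd_mul (hb 1) ha1 h2
  exact funext (Fin.cases hb0 (Fin.cases hb1 hbk))

theorem eq_zero_or_eq_zero_of_dvd_sum_smul_cdmLift (ha : ∀ i, |a i| ≤ 1) (hb : ∀ j, |b j| ≤ 1)
    (h1 : 2 ^ (n + 1) ∣ (∑ i, ∑ j, (a i * b j) • cdmLift (n + 1) i j).1)
    (h2 : 2 ∣ (∑ i, ∑ j, (a i * b j) • cdmLift (n + 1) i j).2) : a = 0 ∨ b = 0 := by
  rw [sum_smul_cdmLift] at h1 h2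
  rcases Int.eq_zero_or_odd_of_abs_le_one (ha 1) with ha1 | ha1
  · rcases Int.eq_zero_or_odd_of_abs_le_one (ha 0) with ha0 | ha0
    · exact Or.inl (funext fun i => by fin_cases i <;> assumption)
    · exact Or.inr (eq_zero_of_dvd_of_second_coeff_eq_zero hb ha0 ha1 h1 h2)
  · exact Or.inr
      (eq_zero_of_dvd_of_odd_second_coeff hb (Int.eq_zero_or_odd_of_abs_le_one (ha 0)) ha1 h1 h2)

end

/-- The explicit `2 × (e+1)` matrix over `Z_{2^e} × Z_2` with first row
`(0,1), (1,0), (2,0), (4,0), …, (2^{e-1},0)` and second row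
`(2^{e-1},1), (0,1), (1,0), (2,0), …, (2^{e-2},0)` is a `(Z_{2^e} × Z_2, 2, 0)`
contracted difference matrix; in particular such a matrix exists. -/
theorem stmt_17 (e : ℕ) (he : 0 < e) :
    IsCDM 2
      (fun (i : Fin 2) (j : Fin (e + 1)) =>
        if (i : ℕ) = 0 then
          (if (j : ℕ) = 0 then ((0 : ZMod (2 ^ e)), (1 : ZMod 2))
           else ((2 ^ ((j : ℕ) - 1) : ZMod (2 ^ e)), 0))
        else
          (if (j : ℕ) = 0 then ((2 ^ (e - 1) : ZMod (2 ^ e)), 1)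
           else if (j : ℕ) = 1 then (0, 1)
           else ((2 ^ ((j : ℕ) - 2) : ZMod (2 ^ e)), 0)))
      0 ∧
    ∃ M : Fin 2 → Fin (e + 1) → ZMod (2 ^ e) × ZMod 2, IsCDM 2 M 0 := by
  obtain ⟨n, rfl⟩ : ∃ n, e = n + 1 := ⟨e - 1, by omega⟩
  have hcdm := isCDM_two_zero_of_intCast (m := 2 ^ (n + 1)) (m' := 2) (pow_succ 2 (n + 1)).symm
    (cdmLift (n + 1)) fun a b ha hb h1 h2 =>
      eq_zero_or_eq_zero_of_dvd_sum_smul_cdmLift ha hb (by exact_mod_cast h1) (by exact_mod_cast h2)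
  refine (fun h => ⟨h, _, h⟩) ?_
  convert hcdm using 3 with i j
  unfold cdmLift
  split_ifs <;> simp
end

section
/- Let G be a group containing a nontrivial cyclic Sylow 2-subgroup and let λ be odd. Then there does not exist a (G, 3, λ) difference matrix. -/
open Finset

theorem Fintype.prod_comp_of_card_fiber_eq {α β M : Type*} [Fintype α] [Fintype β]
    [CommMonoid M] (d : α → β) {c : ℕ} (hc : ∀ b, Nat.card {a // d a = b} = c) (f : β → M) :
    ∏ a, f (d a) = (∏ b, f b) ^ c := by
  classical
  rw [← Fintype.prod_fiberwise' d f, ← prod_pow]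
  refine Finset.prod_congr rfl fun b _ => ?_
  rw [prod_const, card_univ, ← Nat.card_eq_fintype_card, hc b]

theorem MonoidHom.prod_univ_eq_prod_pow_card_ker {G H : Type*} [Group G] [Fintype G]
    [CommGroup H] [Fintype H] {ψ : G →* H} (hψ : Function.Surjective ψ) :
    ∏ g, ψ g = (∏ h, h) ^ Nat.card ψ.ker :=
  Fintype.prod_comp_of_card_fiber_eq ψ
    (fun h => Nat.card_congr (ψ.fiberEquivKerOfSurjective hψ h)) _root_.id

namespace IsDiffMatrix

variable {G H I J : Type*} [Group G] [Fintype G] [CommGroup H] [Fintype J]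
  {A : I → J → G} {lam : ℕ}

theorem prod_div_prod_eq (hA : IsDiffMatrix A lam) {i ℓ : I} (h : i ≠ ℓ) (ψ : G →* H) :
    (∏ j, ψ (A i j)) / ∏ j, ψ (A ℓ j) = (∏ g, ψ g) ^ lam := by
  rw [← prod_div_distrib]
  simp_rw [← map_div, div_eq_mul_inv]
  exact Fintype.prod_comp_of_card_fiber_eq _ (hA.2 i ℓ h) ψ

theorem prod_pow_eq_one (hA : IsDiffMatrix A lam) {i₁ i₂ i₃ : I} (h₁₂ : i₁ ≠ i₂)
    (h₂₃ : i₂ ≠ i₃) (h₁₃ : i₁ ≠ i₃) (ψ : G →* H) : (∏ g, ψ g) ^ lam = 1 := by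
  refine (mul_eq_left (a := (∏ g, ψ g) ^ lam)).mp ?_
  calc (∏ g, ψ g) ^ lam * (∏ g, ψ g) ^ lam
      = ((∏ j, ψ (A i₁ j)) / ∏ j, ψ (A i₂ j)) * ((∏ j, ψ (A i₂ j)) / ∏ j, ψ (A i₃ j)) := by
        rw [hA.prod_div_prod_eq h₁₂, hA.prod_div_prod_eq h₂₃]
    _ = (∏ g, ψ g) ^ lam := by rw [div_mul_div_cancel, hA.prod_div_prod_eq h₁₃]

end IsDiffMatrix

theorem ZMod.sum_univ_eq_natCast_sum_range (n : ℕ) [NeZero n] :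
    ∑ x : ZMod n, x = ((∑ i ∈ range n, i : ℕ) : ZMod n) := by
  rw [Nat.cast_sum]
  exact sum_nbij' ZMod.val (fun i => (i : ZMod n)) (fun x _ => mem_range.mpr x.val_lt)
    (fun _ _ => mem_univ _) (fun x _ => ZMod.natCast_zmod_val x)
    (fun i hi => ZMod.val_cast_of_lt (mem_range.mp hi)) fun x _ => (ZMod.natCast_zmod_val x).symm

theorem ZMod.sum_univ_eq_half (m : ℕ) [NeZero m] : ∑ x : ZMod (m + m), x = m := by
  have hgauss : ∑ i ∈ range (m + m), i = m * (m + m - 1) :=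
    Nat.eq_of_mul_eq_mul_right two_pos (by rw [sum_range_id_mul_two]; ring)
  have hm : ((m : ℕ) : ZMod (m + m)) + m = 0 := by rw [← Nat.cast_add, ZMod.natCast_self]
  rw [sum_univ_eq_natCast_sum_range, hgauss, Nat.cast_mul,
    Nat.cast_sub (by have := NeZero.pos m; omega), Nat.cast_one, ZMod.natCast_self, zero_sub,
    mul_neg_one, neg_eq_iff_add_eq_zero, hm]

theorem ZMod.nsmul_sum_univ_ne_zero {n t : ℕ} [NeZero n] (hn : Even n) (ht : Odd t) :
    t • ∑ x : ZMod n, x ≠ 0 := by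
  obtain ⟨m, rfl⟩ := hn
  have : NeZero m := ⟨by rintro rfl; exact NeZero.ne (0 + 0) rfl⟩
  rw [ZMod.sum_univ_eq_half, nsmul_eq_mul, ← Nat.cast_mul, Ne, ZMod.natCast_eq_zero_iff,
    ← two_mul, Nat.mul_dvd_mul_iff_right (NeZero.pos m)]
  exact ht.not_two_dvd_nat

theorem MonoidHom.transferSylow_surjective {G : Type*} [Group G] [Finite G] {p : ℕ}
    [Fact p.Prime] (P : Sylow p G)
    (hP : Subgroup.normalizer (P : Set G) ≤ Subgroup.centralizer (P : Set G)) :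
    Function.Surjective (transferSylow P hP) := by
  have hbij : Function.Bijective ((transferSylow P hP).domRestrict (P : Subgroup G)) :=
    (transferSylow_domRestrict_eq_pow P hP).symm ▸ (P.2.powEquiv' P.not_dvd_index).bijective
  exact fun y => (hbij.2 y).elim fun x hx => ⟨x, hx⟩

theorem IsCyclic.exists_surjective_zmod_sylow {G : Type*} [Group G] [Finite G] {p : ℕ}
    [Fact p.Prime] (hp : (Nat.card G).minFac = p) {P : Sylow p G} (hP : IsCyclic P) :
    ∃ ψ : G →* Multiplicative (ZMod (Nat.card P)),
      Function.Surjective ψ ∧ ¬ p ∣ Nat.card ψ.ker := by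
  have hN := hP.normalizer_le_centralizer hp
  let e := (zmodCyclicMulEquiv hP).symm
  refine ⟨(e : P →* _).comp (MonoidHom.transferSylow P hN),
    e.surjective.comp (MonoidHom.transferSylow_surjective P hN), ?_⟩
  rw [MonoidHom.ker_mulEquiv_comp]
  exact MonoidHom.not_dvd_card_ker_transferSylow P hN

/-- If `G` has a nontrivial cyclic Sylow 2-subgroup and `λ` is odd, then there is no
`(G, 3, λ)` difference matrix. -/
theorem stmt_19 {G : Type*} [Group G] [Finite G] (P : Sylow 2 G)
    (hcyc : IsCyclic P) (hnt : Nontrivial P) (lam : ℕ) (hlam : Odd lam) :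
    ¬ ∃ A : Fin 3 → Fin (lam * Nat.card G) → G, IsDiffMatrix A lam := by
  rintro ⟨A, hA⟩
  have := Fintype.ofFinite G
  obtain ⟨k, hk, hcard⟩ := P.2.nontrivial_iff_card.mp hnt
  have hP2 : Even (Nat.card P) := hcard ▸ Nat.even_pow.mpr ⟨even_two, hk.ne'⟩
  have hG2 : (Nat.card G).minFac = 2 :=
    (Nat.minFac_eq_two_iff _).mpr (hP2.two_dvd.trans (Subgroup.card_subgroup_dvd_card _))
  obtain ⟨ψ, hψ, hker⟩ := hcyc.exists_surjective_zmod_sylow hG2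
  have : NeZero (Nat.card P) := ⟨Nat.card_pos.ne'⟩
  have hodd : Odd (Nat.card ψ.ker * lam) :=
    (Nat.odd_iff.mpr (Nat.two_dvd_ne_zero.mp hker)).mul hlam
  refine ZMod.nsmul_sum_univ_ne_zero hP2 hodd ?_
  have h := hA.prod_pow_eq_one (i₁ := 0) (i₂ := 1) (i₃ := 2) (by decide) (by decide) (by decide) ψ
  rw [ψ.prod_univ_eq_prod_pow_card_ker hψ, ← pow_mul] at h
  have hadd := congrArg Multiplicative.toAdd h
  rwa [toAdd_pow, toAdd_prod, toAdd_one,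
    Fintype.sum_equiv Multiplicative.toAdd _ (fun x => x) fun _ => rfl] at hadd
end
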